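/- arXiv:2310.09763 — 15 statements merged into one kernel-verified Lean document; each statement's English description precedes it below -/
import Mathlib

section
/- Let A be a commutative ring, n, r ≥ 0, and P an n×n matrix over A. Then P is idempotent (P·P = P) with image Im(P) := range of the linear map v ↦ P·v a free A-module of rank r if and only if there exist an n×r matrix X and an r×n matrix Y over A such that Y·X = I_r and P = X·Y. -/
/-! An endomorphism `e` of `M` is idempotent with
`range e ≃ N` iff `e = f ∘ g` for some `f : N → M`, `g : M → N` with `g ∘ f = id`.
If `g ∘ f = id`, then `f` is injective and `g` surjective, so `f` maps `N` isomorphically onto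
`range (f ∘ g) = range f`. Conversely, an idempotent `e` is the identity on its range, so
`g := φ ∘ e` and `f := φ⁻¹` followed by the inclusion work for any `φ : range e ≃ N`.
Take `N = A^r` and translate composition of linear maps into products of matrices. -/

namespace LinearMap

variable {R M N : Type*} [Semiring R] [AddCommMonoid M] [Module R M] [AddCommMonoid N] [Module R N]

theorem isIdempotentElem_comp_of_comp_eq_id {f : N →ₗ[R] M} {g : M →ₗ[R] N}
    (h : g ∘ₗ f = id) : IsIdempotentElem (f ∘ₗ g : Module.End R M) := by
  change (f ∘ₗ g) ∘ₗ (f ∘ₗ g) = f ∘ₗ g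
  rw [comp_assoc, ← comp_assoc g, h, id_comp]

theorem range_comp_eq_of_comp_eq_id {f : N →ₗ[R] M} {g : M →ₗ[R] N} (h : g ∘ₗ f = id) :
    range (f ∘ₗ g) = range f :=
  range_comp_of_range_eq_top f <| range_eq_top.2 fun v => ⟨f v, congr($h v)⟩

theorem nonempty_range_comp_equiv_of_comp_eq_id {f : N →ₗ[R] M} {g : M →ₗ[R] N}
    (h : g ∘ₗ f = id) : Nonempty (range (f ∘ₗ g) ≃ₗ[R] N) :=
  have hf : Function.Injective f := Function.LeftInverse.injective (g := g) fun v => congr($h v)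
  ⟨(LinearEquiv.ofEq _ _ (range_comp_eq_of_comp_eq_id h)).trans
    (LinearEquiv.ofInjective f hf).symm⟩

theorem IsIdempotentElem.rangeRestrict_comp_subtype {e : Module.End R M}
    (he : IsIdempotentElem e) : e.rangeRestrict ∘ₗ (range e).subtype = id :=
  LinearMap.ext fun x => Subtype.ext <| (IsIdempotentElem.mem_range_iff he).1 x.2

theorem IsIdempotentElem.exists_comp_eq_id {e : Module.End R M} (he : IsIdempotentElem e)
    (φ : range e ≃ₗ[R] N) :
    ∃ (f : N →ₗ[R] M) (g : M →ₗ[R] N), g ∘ₗ f = id ∧ f ∘ₗ g = e := by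
  refine ⟨(range e).subtype ∘ₗ φ.symm, φ ∘ₗ e.rangeRestrict, ?_, ?_⟩
  · change φ.toLinearMap ∘ₗ (e.rangeRestrict ∘ₗ (range e).subtype) ∘ₗ φ.symm.toLinearMap
      = id
    rw [IsIdempotentElem.rangeRestrict_comp_subtype he, id_comp, φ.comp_symm]
  · change (range e).subtype ∘ₗ (φ.symm.toLinearMap ∘ₗ φ.toLinearMap) ∘ₗ e.rangeRestrict
      = e
    rw [φ.symm_comp, id_comp]
    rfl

theorem isIdempotentElem_and_nonempty_range_equiv_iff (e : Module.End R M) :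
    IsIdempotentElem e ∧ Nonempty (range e ≃ₗ[R] N) ↔
      ∃ (f : N →ₗ[R] M) (g : M →ₗ[R] N), g ∘ₗ f = id ∧ f ∘ₗ g = e := by
  constructor
  · rintro ⟨he, ⟨φ⟩⟩
    exact IsIdempotentElem.exists_comp_eq_id he φ
  · rintro ⟨f, g, h, rfl⟩
    exact ⟨isIdempotentElem_comp_of_comp_eq_id h, nonempty_range_comp_equiv_of_comp_eq_id h⟩

end LinearMap

theorem Matrix.exists_mul_eq_one_and_eq_mul_iff {R m n : Type*} [CommSemiring R]
    [Fintype m] [DecidableEq m] [Fintype n] [DecidableEq n] (P : Matrix n n R) :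
    (∃ (X : Matrix n m R) (Y : Matrix m n R), Y * X = 1 ∧ P = X * Y) ↔
      ∃ (f : (m → R) →ₗ[R] n → R) (g : (n → R) →ₗ[R] m → R),
        g ∘ₗ f = LinearMap.id ∧ f ∘ₗ g = P.mulVecLin := by
  refine Iff.trans ?_ Matrix.toLin'.surjective.exists.symm
  refine exists_congr fun X => Iff.trans ?_ Matrix.toLin'.surjective.exists.symm
  refine exists_congr fun Y => ?_
  rw [← Matrix.toLin'_mul, ← Matrix.toLin'_one, ← Matrix.toLin'_apply', ← Matrix.toLin'_mul,
    Matrix.toLin'.injective.eq_iff, Matrix.toLin'.injective.eq_iff, eq_comm (a := P)]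

/-- A square matrix `P` over a commutative ring is idempotent with image a free
module of rank `r` iff `P = X * Y` with `Y * X = I_r`. -/
theorem stmt_0 {A : Type*} [CommRing A] (n r : ℕ) (P : Matrix (Fin n) (Fin n) A) :
    (P * P = P ∧
      Nonempty (Module.Basis (Fin r) A (LinearMap.range (Matrix.mulVecLin P)))) ↔
    ∃ (X : Matrix (Fin n) (Fin r) A) (Y : Matrix (Fin r) (Fin n) A),
      Y * X = 1 ∧ P = X * Y := by
  rw [Matrix.exists_mul_eq_one_and_eq_mul_iff,
    ← LinearMap.isIdempotentElem_and_nonempty_range_equiv_iff]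
  refine and_congr ?_ ⟨fun ⟨b⟩ => ⟨b.equivFun⟩, fun ⟨φ⟩ => ⟨.ofEquivFun φ⟩⟩
  rw [← Matrix.toLin'.injective.eq_iff, Matrix.toLin'_mul]
  rfl
end

section
/- Let A be a commutative ring, n ≥ 1, P an n×n matrix over A, x a column vector (x : Fin n → A) and y a row vector (y : Fin n → A) such that ∑_i y_i·x_i = 1 and x_i·y_j = P i j for all i, j. Then for any other column vector x' and row vector y' with x'_i·y'_j = P i j for all i, j, there exists a unit u ∈ Aˣ such that x'_i = u·x_i for all i, y_j = u·y'_j for all j, and moreover ∑_i y'_i·x'_i = 1. -/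
/-! If `x ⊗ y = x' ⊗ y'` and `y ⬝ x = 1`, then applying the common outer product to `x` on the
right and to `y'` on the left gives `(y' ⬝ x) • x' = x` and `(y ⬝ x') • y' = y`. Hence
`(y ⬝ x') (y' ⬝ x) = y ⬝ x = 1`, so `u = y ⬝ x'` is a unit with `x' = u • x`, `y = u • y'`,
and then `y' ⬝ x' = u (y' ⬝ x) = 1`. -/

open Matrix

section OuterProduct

variable {ι R : Type*} [Fintype ι] [CommSemiring R] {x y x' y' : ι → R}

theorem dotProduct_smul_col_eq_of_vecMulVec_eq (h : vecMulVec x' y' = vecMulVec x y)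
    (hyx : y ⬝ᵥ x = 1) : (y' ⬝ᵥ x) • x' = x := by
  simpa [vecMulVec_mulVec, hyx] using congrArg (· *ᵥ x) h

theorem dotProduct_smul_row_eq_of_vecMulVec_eq (h : vecMulVec x' y' = vecMulVec x y)
    (hyx : y ⬝ᵥ x = 1) : (y ⬝ᵥ x') • y' = y := by
  simpa [vecMul_vecMulVec, hyx] using congrArg (y ᵥ* ·) h

theorem dotProduct_mul_dotProduct_eq_one_of_vecMulVec_eq (h : vecMulVec x' y' = vecMulVec x y)
    (hyx : y ⬝ᵥ x = 1) : (y ⬝ᵥ x') * (y' ⬝ᵥ x) = 1 := by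
  rw [mul_comm, ← smul_eq_mul, ← dotProduct_smul,
    dotProduct_smul_col_eq_of_vecMulVec_eq h hyx, hyx]

theorem eq_dotProduct_smul_of_vecMulVec_eq (h : vecMulVec x' y' = vecMulVec x y)
    (hyx : y ⬝ᵥ x = 1) : x' = (y ⬝ᵥ x') • x := by
  conv_rhs => rw [← dotProduct_smul_col_eq_of_vecMulVec_eq h hyx]
  rw [smul_smul, dotProduct_mul_dotProduct_eq_one_of_vecMulVec_eq h hyx, one_smul]

theorem exists_unit_of_vecMulVec_eq (h : vecMulVec x' y' = vecMulVec x y) (hyx : y ⬝ᵥ x = 1) :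
    ∃ u : Rˣ, x' = (u : R) • x ∧ y = (u : R) • y' ∧ y' ⬝ᵥ x' = 1 := by
  have huv := dotProduct_mul_dotProduct_eq_one_of_vecMulVec_eq h hyx
  have hx' := eq_dotProduct_smul_of_vecMulVec_eq h hyx
  refine ⟨⟨_, _, huv, by rw [mul_comm, huv]⟩, hx',
    (dotProduct_smul_row_eq_of_vecMulVec_eq h hyx).symm, ?_⟩
  rw [hx', dotProduct_smul, smul_eq_mul, huv]

end OuterProduct

theorem stmt_1_general {A : Type*} [CommRing A] (n : ℕ)
    (P : Matrix (Fin n) (Fin n) A) (x y : Fin n → A)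
    (h1 : ∑ i, y i * x i = 1) (h2 : ∀ i j, x i * y j = P i j)
    (x' y' : Fin n → A) (h3 : ∀ i j, x' i * y' j = P i j) :
    ∃ u : Aˣ, (∀ i, x' i = u * x i) ∧ (∀ j, y j = u * y' j) ∧
      ∑ i, y' i * x' i = 1 := by
  have houter : vecMulVec x' y' = vecMulVec x y := by
    ext i j
    rw [vecMulVec_apply, vecMulVec_apply, h2, h3]
  obtain ⟨u, hx, hy, hyx'⟩ := exists_unit_of_vecMulVec_eq houter h1
  exact ⟨u, fun i => congrFun hx i, fun j => congrFun hy j, hyx'⟩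

/-- Uniqueness up to a unit of the outer-product factorization of a rank-one
idempotent matrix. -/
theorem stmt_1 {A : Type*} [CommRing A] (n : ℕ) (hn : 0 < n)
    (P : Matrix (Fin n) (Fin n) A) (x y : Fin n → A)
    (h1 : ∑ i, y i * x i = 1) (h2 : ∀ i j, x i * y j = P i j)
    (x' y' : Fin n → A) (h3 : ∀ i j, x' i * y' j = P i j) :
    ∃ u : Aˣ, (∀ i, x' i = u * x i) ∧ (∀ j, y j = u * y' j) ∧
      ∑ i, y' i * x' i = 1 :=
  stmt_1_general n P x y h1 h2 x' y' h3
end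

section
/- Let A be a commutative ring and P, Q two idempotent n×n matrices over A (P·P = P, Q·Q = Q). If the images of P and Q in the matrix ring over A/nil(A) are conjugate, i.e., there exists a matrix C over A whose reduction mod nil(A) is invertible and satisfies C̄·P̄·C̄⁻¹ = Q̄, then P and Q are conjugate over A: there exists U ∈ GL_n(A) with U·P·U⁻¹ = Q. -/
/-!
Reduction modulo the nilradical is a local homomorphism, also on matrix rings (test units on
the determinant). So `C` lifts to a unit, and `C P C⁻¹` is an idempotent with the same reduction
as `Q`. For idempotents `e`, `f`, the element `u = f e + (1 - f) (1 - e)` satisfies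
`u e = f u`; if `e` and `f` have the same reduction, then `u` reduces to `f + (1 - f) = 1`,
so `u` is a unit conjugating `e` to `f`.
-/

open Matrix

instance RingHom.isLocalHom_mapMatrix {R S : Type*} [CommRing R] [CommRing S] (f : R →+* S)
    [IsLocalHom f] (n : Type*) [Fintype n] [DecidableEq n] :
    IsLocalHom (f.mapMatrix : Matrix n n R →+* Matrix n n S) where
  map_nonunit M hM := by
    rw [isUnit_iff_isUnit_det, ← RingHom.map_det] at hM
    rw [isUnit_iff_isUnit_det]
    exact IsUnit.of_map f _ hM

instance isLocalHom_quotient_mk_nilradical (A : Type*) [CommRing A] :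
    IsLocalHom (Ideal.Quotient.mk (nilradical A)) :=
  isLocalHom_of_le_jacobson_bot _ Ideal.radical_le_jacobson

lemma IsIdempotentElem.units_conj {R : Type*} [Monoid R] {e : R} (he : IsIdempotentElem e)
    (U : Rˣ) : IsIdempotentElem (U * e * ↑U⁻¹) := by
  simp only [IsIdempotentElem, mul_assoc, Units.inv_mul_cancel_left]
  rw [← mul_assoc e, he.eq]

theorem IsIdempotentElem.exists_units_conj_eq_of_map_eq {R S : Type*} [Ring R] [Ring S]
    (φ : R →+* S) [IsLocalHom φ] {e f : R} (he : IsIdempotentElem e) (hf : IsIdempotentElem f)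
    (h : φ e = φ f) : ∃ U : Rˣ, U * e * ↑U⁻¹ = f := by
  set u := f * e + (1 - f) * (1 - e)
  have hu_conj : u * e = f * u := by
    simp only [u, add_mul, mul_add, mul_assoc, sub_mul, mul_sub, one_mul, mul_one, he.eq,
      ← mul_assoc f f, hf.eq]
    abel
  have hu : IsUnit u := by
    refine IsUnit.of_map φ _ ?_
    simp only [u, map_add, map_mul, map_sub, map_one, h, (hf.map φ).eq, (hf.map φ).one_sub.eq,
      add_sub_cancel, isUnit_one]
  refine ⟨hu.unit, ?_⟩
  rw [IsUnit.unit_spec, hu_conj, mul_assoc, hu.mul_val_inv, mul_one]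

/-- Idempotent matrices that become conjugate over `A ⧸ nilradical A` are
conjugate over `A`. -/
theorem stmt_2 {A : Type*} [CommRing A] (n : ℕ)
    (P Q : Matrix (Fin n) (Fin n) A) (hP : P * P = P) (hQ : Q * Q = Q)
    (C : Matrix (Fin n) (Fin n) A)
    (hC : IsUnit (C.map (Ideal.Quotient.mk (nilradical A))))
    (hconj : C.map (Ideal.Quotient.mk (nilradical A)) *
        P.map (Ideal.Quotient.mk (nilradical A)) *
        (C.map (Ideal.Quotient.mk (nilradical A)))⁻¹ =
      Q.map (Ideal.Quotient.mk (nilradical A))) :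
    ∃ U : (Matrix (Fin n) (Fin n) A)ˣ,
      (U : Matrix (Fin n) (Fin n) A) * P * (↑U⁻¹ : Matrix (Fin n) (Fin n) A) = Q := by
  let F := (Ideal.Quotient.mk (nilradical A)).mapMatrix (m := Fin n)
  obtain ⟨C, rfl⟩ := IsUnit.of_map F _ hC
  have hFinv : (F C)⁻¹ = F ↑C⁻¹ :=
    Matrix.inv_eq_right_inv (by rw [← map_mul, C.mul_inv, map_one])
  have hmap : F (C * P * (↑C⁻¹ : Matrix (Fin n) (Fin n) A)) = F Q := by
    rw [map_mul, map_mul, ← hFinv]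
    exact hconj
  obtain ⟨V, hV⟩ :=
    IsIdempotentElem.exists_units_conj_eq_of_map_eq F (IsIdempotentElem.units_conj hP C) hQ hmap
  refine ⟨V * C, ?_⟩
  rw [← hV, _root_.mul_inv_rev, Units.val_mul, Units.val_mul]
  simp only [mul_assoc]
end

section
/- Let A be a commutative ring and P an n×n matrix over A such that every entry of P·P − P lies in the nilradical nil(A) (equivalently, the image of P in matrices over A/nil(A) is idempotent). Then there exists an idempotent n×n matrix Q over A (Q·Q = Q) such that every entry of Q − P lies in nil(A). In particular, every idempotent matrix over A_red lifts to an idempotent matrix over A. -/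
/-!
Reduce to the lifting of idempotents along a ring map with nil kernel. Reduction of entries
modulo `nil(A)` is such a map on matrix rings: a matrix `M` with nilpotent entries is nilpotent,
since its entries generate a finitely generated ideal `I ⊆ nil(A)`, hence `I ^ k = 0` for some
`k`, while the entries of `M ^ k` lie in `I ^ k`.
-/

namespace Matrix

variable {ι A : Type*} [Fintype ι] [DecidableEq ι]

theorem pow_apply_mem_pow [CommSemiring A] {I : Ideal A} {M : Matrix ι ι A}
    (hM : ∀ i j, M i j ∈ I) (k : ℕ) (i j : ι) : (M ^ k) i j ∈ I ^ k := by
  induction k generalizing j with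
  | zero => simp
  | succ k ih =>
    rw [pow_succ M, mul_apply, pow_succ I]
    exact Ideal.sum_mem _ fun l _ => Ideal.mul_mem_mul (ih l) (hM l j)

theorem isNilpotent_of_forall_isNilpotent_apply [CommSemiring A] {M : Matrix ι ι A}
    (hM : ∀ i j, IsNilpotent (M i j)) : IsNilpotent M := by
  let I : Ideal A := Ideal.span (Set.range fun p : ι × ι => M p.1 p.2)
  have hI : IsNilpotent I := by
    refine (Ideal.FG.isNilpotent_iff_le_nilradical
      (Submodule.fg_span (Set.finite_range _))).mpr ?_
    rw [Ideal.span_le]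
    rintro _ ⟨p, rfl⟩
    exact hM p.1 p.2
  obtain ⟨k, hk⟩ := hI
  refine ⟨k, ext fun i j => ?_⟩
  have hMk := pow_apply_mem_pow (I := I)
    (fun i j => Ideal.subset_span (Set.mem_range_self (i, j))) k i j
  rwa [hk, Ideal.zero_eq_bot, Ideal.mem_bot] at hMk

theorem mapMatrix_quotientMk_eq_zero_iff [CommRing A] {I : Ideal A} {M : Matrix ι ι A} :
    (Ideal.Quotient.mk I).mapMatrix M = 0 ↔ ∀ i j, M i j ∈ I := by
  simp [← ext_iff, Ideal.Quotient.eq_zero_iff_mem]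

theorem isNilpotent_of_mem_ker_mapMatrix_quotientMk_nilradical [CommRing A] {M : Matrix ι ι A}
    (hM : M ∈ RingHom.ker ((Ideal.Quotient.mk (nilradical A)).mapMatrix (m := ι))) :
    IsNilpotent M :=
  isNilpotent_of_forall_isNilpotent_apply (mapMatrix_quotientMk_eq_zero_iff.mp hM)

end Matrix

/-- A matrix which is idempotent modulo the nilradical lifts to an idempotent
matrix. -/
theorem stmt_3 {A : Type*} [CommRing A] (n : ℕ)
    (P : Matrix (Fin n) (Fin n) A)
    (hP : ∀ i j, (P * P - P) i j ∈ nilradical A) :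
    ∃ Q : Matrix (Fin n) (Fin n) A,
      Q * Q = Q ∧ ∀ i j, (Q - P) i j ∈ nilradical A := by
  let f := (Ideal.Quotient.mk (nilradical A)).mapMatrix (m := Fin n)
  have hfP : IsIdempotentElem (f P) := by
    rw [IsIdempotentElem, ← map_mul, ← sub_eq_zero, ← map_sub]
    exact Matrix.mapMatrix_quotientMk_eq_zero_iff.mpr hP
  obtain ⟨Q, hQ, hfQ⟩ := exists_isIdempotentElem_eq_of_ker_isNilpotent f
    (fun _ => Matrix.isNilpotent_of_mem_ker_mapMatrix_quotientMk_nilradical) (f P) ⟨P, rfl⟩ hfP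
  refine ⟨Q, hQ, Matrix.mapMatrix_quotientMk_eq_zero_iff.mp ?_⟩
  rw [map_sub, hfQ, sub_self]
end

section
/- (Kronecker's theorem) Let A be a commutative ring, f and g multivariate polynomials in A[(X_s)_{s ∈ σ}], and h = f·g. Let a be any coefficient of f and b any coefficient of g. Then a·b is integral over the subring of A generated by the coefficients of h. -/
/-!
Reduce to a domain: `A` is a quotient of the domain `ℤ[Xₐ : a ∈ A]`, polynomials lift along the
quotient map, and integrality is pushed forward along ring homomorphisms. A domain embeds in
its fraction field `K`, where the integral closure of a subring is the intersection of the
valuation subrings containing it. So it suffices to show `v (f_μ g_ν) ≤ 1` for every valuation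
`v` with `v ≤ 1` on the coefficients of `f g`. This is Gauss's lemma for valuations: if `μ`
(resp. `ν`) is the lexicographically smallest exponent at which `f` (resp. `g`) has a
coefficient of maximal valuation, then `f_μ g_ν` is the unique term of maximal valuation in
the coefficient of `f g` at `μ + ν`.
-/

theorem RingHom.IsIntegralElem.map_closure {D A : Type*} [CommRing D] [CommRing A] {s : Set D}
    {x : D} (hx : (Subring.closure s).subtype.IsIntegralElem x) (φ : D →+* A) :
    (Subring.closure (φ '' s)).subtype.IsIntegralElem (φ x) := by
  have hφ : ∀ y ∈ Subring.closure s, φ y ∈ Subring.closure (φ '' s) := fun y hy => by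
    rw [← RingHom.map_closure]; exact ⟨y, hy, rfl⟩
  exact (hx.map φ).of_comp (f := φ.restrict _ _ hφ)

theorem RingHom.IsIntegralElem.of_map_closure {D K : Type*} [CommRing D] [CommRing K]
    {φ : D →+* K} (hφ : Function.Injective φ) {s : Set D} {x : D}
    (hx : (Subring.closure (φ '' s)).subtype.IsIntegralElem (φ x)) :
    (Subring.closure s).subtype.IsIntegralElem x := by
  let e : Subring.closure s ≃+* Subring.closure (φ '' s) :=
    ((Subring.closure s).equivMapOfInjective φ hφ).trans
      (RingEquiv.subringCongr (RingHom.map_closure φ s))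
  have he : (φ.comp (Subring.closure s).subtype).comp e.symm.toRingHom =
      (Subring.closure (φ '' s)).subtype := by
    ext y
    exact congrArg Subtype.val (e.apply_symm_apply y)
  rw [← he] at hx
  exact (RingHom.IsIntegralElem.map_iff hφ).mp hx.of_comp

namespace MvPolynomial

theorem image_range_coeff {R S σ : Type*} [CommRing R] [CommRing S] (φ : R →+* S)
    (p : MvPolynomial σ R) : φ '' Set.range p.coeff = Set.range (map φ p).coeff := by
  simp only [← Set.range_comp, Function.comp_def, coeff_map]

section DominantExponent

variable {R Γ₀ σ : Type*} [CommRing R] [LinearOrderedCommGroupWithZero Γ₀] [LinearOrder σ]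

def IsDominantExponent (v : Valuation R Γ₀) (f : MvPolynomial σ R) (μ : σ →₀ ℕ) : Prop :=
  (∀ ν, v (f.coeff ν) ≤ v (f.coeff μ)) ∧ ∀ ν, toLex ν < toLex μ → v (f.coeff ν) < v (f.coeff μ)

theorem exists_isDominantExponent (v : Valuation R Γ₀) (f : MvPolynomial σ R)
    (hf : ∃ μ, v (f.coeff μ) ≠ 0) : ∃ μ, IsDominantExponent v f μ ∧ v (f.coeff μ) ≠ 0 := by
  classical
  have hsupp : ∀ ν, v (f.coeff ν) ≠ 0 → ν ∈ f.support :=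
    fun ν hν => mem_support_iff.mpr fun h => hν (by rw [h, map_zero])
  obtain ⟨μ₀, hμ₀⟩ := hf
  obtain ⟨μm, -, hμm⟩ :=
    f.support.exists_max_image (fun μ => v (f.coeff μ)) ⟨μ₀, hsupp μ₀ hμ₀⟩
  have hmax : ∀ ν, v (f.coeff ν) ≤ v (f.coeff μm) := fun ν => by
    by_cases hν : ν ∈ f.support
    · exact hμm ν hν
    · rw [notMem_support_iff.mp hν, map_zero]; exact zero_le
  have hm0 : v (f.coeff μm) ≠ 0 := ((zero_lt_iff.mpr hμ₀).trans_le (hmax μ₀)).ne'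
  obtain ⟨μ, hμ, hμmin⟩ :=
    (f.support.filter fun ν => v (f.coeff ν) = v (f.coeff μm)).exists_min_image toLex
      ⟨μm, Finset.mem_filter.mpr ⟨hsupp μm hm0, rfl⟩⟩
  rw [Finset.mem_filter] at hμ
  refine ⟨μ, ⟨fun ν => hμ.2 ▸ hmax ν, fun ν hν => (hμ.2 ▸ hmax ν).lt_of_ne fun hνμ => ?_⟩,
    hμ.2 ▸ hm0⟩
  have hνm : v (f.coeff ν) = v (f.coeff μm) := hνμ.trans hμ.2
  exact (hμmin ν (Finset.mem_filter.mpr ⟨hsupp ν (hνm ▸ hm0), hνm⟩)).not_gt hν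

theorem valuation_coeff_mul_add_of_isDominantExponent {v : Valuation R Γ₀}
    {f g : MvPolynomial σ R} {μ ν : σ →₀ ℕ} (hf : IsDominantExponent v f μ)
    (hg : IsDominantExponent v g ν) (hf0 : v (f.coeff μ) ≠ 0) (hg0 : v (g.coeff ν) ≠ 0) :
    v ((f * g).coeff (μ + ν)) = v (f.coeff μ) * v (g.coeff ν) := by
  classical
  rw [coeff_mul,
    v.map_sum_eq_of_lt (j := (μ, ν)) (Finset.HasAntidiagonal.mem_antidiagonal.mpr rfl), map_mul]
  rintro ⟨μ', ν'⟩ hμν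
  rw [Finset.mem_sdiff, Finset.HasAntidiagonal.mem_antidiagonal, Finset.mem_singleton] at hμν
  rw [map_mul, map_mul]
  rcases trichotomy_of_add_eq_add (α := Lex (σ →₀ ℕ)) hμν.1 with ⟨rfl, rfl⟩ | hlt | hlt
  · exact absurd rfl hμν.2
  · exact mul_lt_mul_of_lt_of_le_of_nonneg_of_pos (hf.2 μ' hlt) (hg.1 ν') zero_le
      (zero_lt_iff.mpr hg0)
  · exact mul_lt_mul_of_le_of_lt_of_nonneg_of_pos (hf.1 μ') (hg.2 ν' hlt) zero_le
      (zero_lt_iff.mpr hf0)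

end DominantExponent

theorem exists_valuation_coeff_mul_coeff_le {R Γ₀ σ : Type*} [CommRing R]
    [LinearOrderedCommGroupWithZero Γ₀] (v : Valuation R Γ₀) (f g : MvPolynomial σ R) :
    ∃ ρ, ∀ μ ν, v (f.coeff μ) * v (g.coeff ν) ≤ v ((f * g).coeff ρ) := by
  let : LinearOrder σ := IsWellOrder.linearOrder WellOrderingRel
  by_cases hf : ∀ μ, v (f.coeff μ) = 0
  · exact ⟨0, fun μ ν => by simp [hf μ]⟩
  by_cases hg : ∀ ν, v (g.coeff ν) = 0
  · exact ⟨0, fun μ ν => by simp [hg ν]⟩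
  push Not at hf hg
  obtain ⟨μ, hμ, hμ0⟩ := exists_isDominantExponent v f hf
  obtain ⟨ν, hν, hν0⟩ := exists_isDominantExponent v g hg
  refine ⟨μ + ν, fun μ' ν' => ?_⟩
  rw [valuation_coeff_mul_add_of_isDominantExponent hμ hν hμ0 hν0]
  exact mul_le_mul' (hμ.1 μ') (hν.1 ν')

theorem coeff_mul_coeff_mem_valuationSubring {K σ : Type*} [Field K] (V : ValuationSubring K)
    {f g : MvPolynomial σ K} (hfg : ∀ ρ, (f * g).coeff ρ ∈ V) (μ ν : σ →₀ ℕ) :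
    f.coeff μ * g.coeff ν ∈ V := by
  obtain ⟨ρ, hρ⟩ := exists_valuation_coeff_mul_coeff_le V.valuation f g
  rw [← V.valuation_le_one_iff, map_mul]
  exact (hρ μ ν).trans ((V.valuation_le_one_iff _).mpr (hfg ρ))

theorem isIntegralElem_coeff_mul_coeff_of_field {K σ : Type*} [Field K]
    (f g : MvPolynomial σ K) (μ ν : σ →₀ ℕ) :
    (Subring.closure (Set.range (f * g).coeff)).subtype.IsIntegralElem
      (f.coeff μ * g.coeff ν) := by
  change f.coeff μ * g.coeff ν ∈ (integralClosure _ K).toSubring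
  rw [← iInf_valuationSubring_superset, Subring.mem_iInf]
  rintro ⟨V, hV⟩
  exact coeff_mul_coeff_mem_valuationSubring V (fun ρ => hV ⟨ρ, rfl⟩) μ ν

theorem isIntegralElem_coeff_mul_coeff_of_isDomain {D σ : Type*} [CommRing D] [IsDomain D]
    (f g : MvPolynomial σ D) (μ ν : σ →₀ ℕ) :
    (Subring.closure (Set.range (f * g).coeff)).subtype.IsIntegralElem
      (f.coeff μ * g.coeff ν) := by
  let φ := algebraMap D (FractionRing D)
  refine RingHom.IsIntegralElem.of_map_closure (IsFractionRing.injective D (FractionRing D)) ?_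
  rw [image_range_coeff, map_mul, map_mul, ← coeff_map, ← coeff_map]
  exact isIntegralElem_coeff_mul_coeff_of_field (map φ f) (map φ g) μ ν

end MvPolynomial

open MvPolynomial

/-- Kronecker's theorem: the product of a coefficient of `f` and a coefficient
of `g` is integral over the subring generated by the coefficients of `f * g`. -/
theorem stmt_5 {A : Type*} [CommRing A] (σ : Type*)
    (f g : MvPolynomial σ A) (a b : A)
    (ha : ∃ μ, f.coeff μ = a) (hb : ∃ ν, g.coeff ν = b) :
    (Subring.closure {x : A | ∃ μ, (f * g).coeff μ = x}).subtype.IsIntegralElem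
      (a * b) := by
  obtain ⟨μ, rfl⟩ := ha
  obtain ⟨ν, rfl⟩ := hb
  let ψ : MvPolynomial A ℤ →+* A := eval₂Hom (Int.castRingHom A) id
  have hψ : Function.Surjective ψ := fun a => ⟨X a, eval₂_X _ _ a⟩
  obtain ⟨F, rfl⟩ := map_surjective ψ hψ f
  obtain ⟨G, rfl⟩ := map_surjective ψ hψ g
  have h := (isIntegralElem_coeff_mul_coeff_of_isDomain F G μ ν).map_closure ψ
  rwa [image_range_coeff, map_mul, map_mul, ← coeff_map, ← coeff_map] at h
end

section
/- (Schanuel's example: necessity of seminormality) Let A be a reduced commutative ring. Assume that for every n ≥ 1 and every n×n matrix P over the polynomial ring A[X] which is idempotent of rank 1 (P·P = P, all 2×2 minors P i j·P k l − P i l·P k j vanish, trace P = 1) and satisfies P(0) = I_{n,1}, there exist f, g : Fin n → A[X] with P i j = f i · g j for all i, j. Then A is seminormal: for all b, c ∈ A with b² = c³ there exists a ∈ A with a³ = b and a² = c. -/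
/-!
`schanuelMatrix b c` is the outer product of `(1 + aX, a²X)` and `((1 - aX)(1 + a²X²), a²X³)`
with `a` eliminated through `a² = c`, `a³ = b`; the relation `b² = c³` alone makes it a rank-one
idempotent equal to `I_{2,1}` at `0`. Given a factorization `f gᵀ` of it over a domain,
`f₀(0) g₀(0) = 1` forces `X³ ∣ g₁` and `X ∣ f₁`, after which `g₁ / X³` divides the constant `c²`,
so is constant. Comparing coefficients then shows that `t = [X¹]f₀ · g₀(0)` satisfies `t c = b`,
hence `t² = c` if `c ≠ 0`; if `c = 0` then `f₀` is a unit and `t = 0`. Over a reduced ring these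
identities hold modulo every prime ideal, hence hold.
-/

open Polynomial

section SchanuelMatrix

variable {A : Type*} [CommRing A]

noncomputable def schanuelMatrix (b c : A) : Matrix (Fin 2) (Fin 2) A[X] :=
  !![1 - C c ^ 2 * X ^ 4, C c * X ^ 3 + C b * X ^ 4;
     C c * X - C b * X ^ 2 + C c ^ 2 * X ^ 3 - C b * C c * X ^ 4, C c ^ 2 * X ^ 4]

variable {b c : A}

theorem schanuelMatrix_mul_self (hbc : b ^ 2 = c ^ 3) :
    schanuelMatrix b c * schanuelMatrix b c = schanuelMatrix b c := by
  have h : (C b : A[X]) ^ 2 = C c ^ 3 := by rw [← C_pow, ← C_pow, hbc]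
  refine Matrix.ext fun i j => ?_
  fin_cases i <;> fin_cases j <;>
    simp [schanuelMatrix, Matrix.mul_apply, Fin.sum_univ_two] <;>
    first
      | ring1
      | linear_combination (X ^ 6 + C c * X ^ 8) * h
      | linear_combination (-X ^ 6 - C c * X ^ 8 : A[X]) * h

theorem schanuelMatrix_minor (hbc : b ^ 2 = c ^ 3) (i j k l : Fin 2) :
    schanuelMatrix b c i j * schanuelMatrix b c k l
      - schanuelMatrix b c i l * schanuelMatrix b c k j = 0 := by
  have h : (C b : A[X]) ^ 2 = C c ^ 3 := by rw [← C_pow, ← C_pow, hbc]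
  fin_cases i <;> fin_cases j <;> fin_cases k <;> fin_cases l <;>
    simp [schanuelMatrix] <;>
    first
      | ring1
      | linear_combination (X ^ 6 + C c * X ^ 8) * h
      | linear_combination (-X ^ 6 - C c * X ^ 8 : A[X]) * h

theorem schanuelMatrix_trace : (schanuelMatrix b c).trace = 1 := by
  simp [schanuelMatrix, Matrix.trace, Fin.sum_univ_two]

theorem schanuelMatrix_eval_zero (i j : Fin 2) :
    (schanuelMatrix b c i j).eval 0 = if (i : ℕ) = 0 ∧ (j : ℕ) = 0 then 1 else 0 := by
  fin_cases i <;> fin_cases j <;> simp [schanuelMatrix]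

theorem schanuelMatrix_map {B : Type*} [CommRing B] (φ : A →+* B) :
    (schanuelMatrix b c).map (Polynomial.map φ) = schanuelMatrix (φ b) (φ c) := by
  refine Matrix.ext fun i j => ?_
  fin_cases i <;> fin_cases j <;> simp [schanuelMatrix]

end SchanuelMatrix

section Domain

variable {D : Type*} [CommRing D] [IsDomain D]

theorem X_pow_dvd_of_dvd_mul_left {p q : D[X]} (hp : p.coeff 0 ≠ 0) {n : ℕ}
    (h : X ^ n ∣ p * q) : X ^ n ∣ q :=
  prime_X.pow_dvd_of_dvd_mul_left n (by rwa [X_dvd_iff]) h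

theorem eq_C_of_dvd_C {p : D[X]} {a : D} (ha : a ≠ 0) (h : p ∣ C a) : p = C (p.coeff 0) :=
  eq_C_of_natDegree_eq_zero <| Nat.le_zero.mp <|
    (natDegree_le_of_dvd h (C_ne_zero.mpr ha)).trans_eq (natDegree_C a)

variable {b c : D} {f g : Fin 2 → D[X]}

theorem coeff_mul_coeff_mul_eq_of_schanuelMatrix_eq_mul (hc : c ≠ 0)
    (hfg : ∀ i j, schanuelMatrix b c i j = f i * g j) :
    (f 0).coeff 1 * (g 0).coeff 0 * c = b := by
  have e00 : f 0 * g 0 = 1 - C c ^ 2 * X ^ 4 := (hfg 0 0).symm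
  have e01 : f 0 * g 1 = C c * X ^ 3 + C b * X ^ 4 := (hfg 0 1).symm
  have e10 : f 1 * g 0 = C c * X - C b * X ^ 2 + C c ^ 2 * X ^ 3 - C b * C c * X ^ 4 :=
    (hfg 1 0).symm
  have e11 : f 1 * g 1 = C c ^ 2 * X ^ 4 := (hfg 1 1).symm
  have hunit : (f 0).coeff 0 * (g 0).coeff 0 = 1 := by
    simpa [mul_coeff_zero] using congrArg (coeff · 0) e00
  obtain ⟨δ, hδ⟩ : X ^ 3 ∣ g 1 :=
    X_pow_dvd_of_dvd_mul_left (left_ne_zero_of_mul_eq_one hunit)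
      ⟨C c + C b * X, by rw [e01]; ring⟩
  obtain ⟨γ, hγ⟩ : X ∣ f 1 := by
    simpa using X_pow_dvd_of_dvd_mul_left (n := 1) (right_ne_zero_of_mul_eq_one hunit)
      ⟨C c - C b * X + C c ^ 2 * X ^ 2 - C b * C c * X ^ 3, by rw [mul_comm, e10]; ring⟩
  have e01' : f 0 * δ = C c + C b * X :=
    mul_left_cancel₀ (pow_ne_zero 3 X_ne_zero) (by rw [hδ] at e01; linear_combination e01)
  have e11' : γ * δ = C c ^ 2 :=
    mul_left_cancel₀ (pow_ne_zero 4 X_ne_zero) (by rw [hδ, hγ] at e11; linear_combination e11)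
  obtain ⟨d, rfl⟩ : ∃ d, δ = C d :=
    ⟨_, eq_C_of_dvd_C (pow_ne_zero 2 hc) ⟨γ, by rw [C_pow, ← e11', mul_comm]⟩⟩
  have h0 : (f 0).coeff 0 * d = c := by simpa using congrArg (coeff · 0) e01'
  have h1 : (f 0).coeff 1 * d = b := by simpa using congrArg (coeff · 1) e01'
  linear_combination -((f 0).coeff 1 * (g 0).coeff 0) * h0 + (f 0).coeff 1 * d * hunit + h1

theorem sq_eq_and_mul_eq_of_schanuelMatrix_eq_mul (hbc : b ^ 2 = c ^ 3)
    (hfg : ∀ i j, schanuelMatrix b c i j = f i * g j) :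
    ((f 0).coeff 1 * (g 0).coeff 0) ^ 2 = c ∧ (f 0).coeff 1 * (g 0).coeff 0 * c = b := by
  rcases eq_or_ne c 0 with rfl | hc
  · obtain rfl : b = 0 := pow_eq_zero_iff two_ne_zero |>.mp (by rw [hbc]; ring)
    have hf0 : IsUnit (f 0) :=
      IsUnit.of_mul_eq_one (g 0) (by simpa [schanuelMatrix] using (hfg 0 0).symm)
    have : (f 0).coeff 1 = 0 :=
      coeff_eq_zero_of_natDegree_lt (by rw [natDegree_eq_zero_of_isUnit hf0]; exact one_pos)
    simp [this]
  · have htc := coeff_mul_coeff_mul_eq_of_schanuelMatrix_eq_mul hc hfg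
    refine ⟨?_, htc⟩
    have : c ^ 2 * (((f 0).coeff 1 * (g 0).coeff 0) ^ 2 - c) = 0 := by
      linear_combination ((f 0).coeff 1 * (g 0).coeff 0 * c + b) * htc + hbc
    exact sub_eq_zero.mp ((mul_eq_zero.mp this).resolve_left (pow_ne_zero 2 hc))

end Domain

theorem eq_of_forall_isPrime_mk_eq {A : Type*} [CommRing A] [IsReduced A] {x y : A}
    (h : ∀ p : Ideal A, p.IsPrime → Ideal.Quotient.mk p x = Ideal.Quotient.mk p y) : x = y := by
  refine sub_eq_zero.mp (IsNilpotent.eq_zero (nilpotent_iff_mem_prime.mpr fun p hp => ?_))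
  rw [← Ideal.Quotient.eq]
  exact h p hp

open Polynomial in
/-- Schanuel's example: if every rank-one idempotent matrix over `A[X]` with
`P(0) = I_{n,1}` factors as an outer product over `A[X]`, then the reduced ring
`A` is seminormal. -/
theorem stmt_6 {A : Type*} [CommRing A] [IsReduced A]
    (H : ∀ (n : ℕ), 0 < n → ∀ P : Matrix (Fin n) (Fin n) (Polynomial A),
      P * P = P →
      (∀ i j k l, P i j * P k l - P i l * P k j = 0) →
      (∑ i, P i i = 1) →
      (∀ i j, Polynomial.eval (0 : A) (P i j) =
        if (i : ℕ) = 0 ∧ (j : ℕ) = 0 then 1 else 0) →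
      ∃ f g : Fin n → Polynomial A, ∀ i j, P i j = f i * g j) :
    ∀ b c : A, b ^ 2 = c ^ 3 → ∃ a : A, a ^ 3 = b ∧ a ^ 2 = c := by
  intro b c hbc
  obtain ⟨f, g, hfg⟩ := H 2 two_pos (schanuelMatrix b c) (schanuelMatrix_mul_self hbc)
    (schanuelMatrix_minor hbc) schanuelMatrix_trace schanuelMatrix_eval_zero
  set t := (f 0).coeff 1 * (g 0).coeff 0
  have hmod : ∀ p : Ideal A, p.IsPrime →
      Ideal.Quotient.mk p (t ^ 2) = Ideal.Quotient.mk p c ∧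
        Ideal.Quotient.mk p (t * c) = Ideal.Quotient.mk p b := by
    intro p hp
    set φ := Ideal.Quotient.mk p
    have hfg' : ∀ i j, schanuelMatrix (φ b) (φ c) i j = (f i).map φ * (g j).map φ := by
      intro i j
      rw [← schanuelMatrix_map, Matrix.map_apply, hfg, Polynomial.map_mul]
    simpa [t, coeff_map] using
      sq_eq_and_mul_eq_of_schanuelMatrix_eq_mul (by rw [← map_pow, ← map_pow, hbc]) hfg'
  have ht2 : t ^ 2 = c := eq_of_forall_isPrime_mk_eq fun p hp => (hmod p hp).1
  have htc : t * c = b := eq_of_forall_isPrime_mk_eq fun p hp => (hmod p hp).2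
  exact ⟨t, by rw [pow_succ, ht2, ← htc, mul_comm], ht2⟩
end

section
/- Let A be an integral domain in which any two elements have a greatest common divisor (a GCD domain). Then Pic A is trivial in the following concrete sense: for every n×n matrix P over A which is idempotent of rank 1 (P·P = P, all 2×2 minors P i j·P k l − P i l·P k j vanish, trace P = 1), there exist f, g : Fin n → A such that P i j = f i · g j for all i, j. -/
/-!
Pick a nonzero entry `M a b` and write its column as `M i b = e * c i` with `e` the gcd of the
column, so that the `c i` have gcd `1`. The minor `M i j * M a b = M i b * M a j` then reads
`c a * M i j = c i * M a j`: thus `c a` divides every `c i * M a j`, hence their gcd, which is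
`M a j` up to a unit, and `M i j = c i * (M a j / c a)`.
-/

theorem Finset.dvd_of_forall_dvd_mul_of_gcd_eq_one {ι α : Type*} [CommMonoidWithZero α]
    [NormalizedGCDMonoid α] {s : Finset ι} {f : ι → α} (hf : s.gcd f = 1) {d x : α}
    (h : ∀ i ∈ s, d ∣ f i * x) : d ∣ x := by
  have := (Finset.dvd_gcd h).trans (s.gcd_mul_right' f x).dvd
  rwa [hf, one_mul] at this

namespace Matrix

variable {m n A : Type*} [Fintype m] [CommMonoidWithZero A]

theorem exists_outer_product_of_mul_eq_mul_of_ne_zero [NormalizedGCDMonoid A]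
    (M : Matrix m n A) (hM : ∀ i j k l, M i j * M k l = M i l * M k j) {a : m} {b : n}
    (hab : M a b ≠ 0) : ∃ (f : m → A) (g : n → A), ∀ i j, M i j = f i * g j := by
  obtain ⟨c, hc, hc_gcd⟩ := Finset.univ.extract_gcd (fun i ↦ M i b) ⟨a, Finset.mem_univ a⟩
  set e := Finset.univ.gcd fun i ↦ M i b
  have he : e ≠ 0 := fun h ↦ hab (by rw [hc a (Finset.mem_univ a), h, zero_mul])
  have hca : c a ≠ 0 := fun h ↦ hab (by rw [hc a (Finset.mem_univ a), h, mul_zero])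
  have hrow : ∀ i j, c a * M i j = c i * M a j := fun i j ↦ mul_left_cancel₀ he <| by
    have := hM i j a b
    rw [hc a (Finset.mem_univ a), hc i (Finset.mem_univ i)] at this
    calc e * (c a * M i j) = M i j * (e * c a) := by ac_rfl
      _ = e * c i * M a j := this
      _ = e * (c i * M a j) := by ac_rfl
  have hdvd : ∀ j, c a ∣ M a j := fun j ↦
    Finset.dvd_of_forall_dvd_mul_of_gcd_eq_one hc_gcd fun i _ ↦ ⟨M i j, (hrow i j).symm⟩
  choose g hg using hdvd
  refine ⟨c, g, fun i j ↦ mul_left_cancel₀ hca ?_⟩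
  rw [hrow i j, hg j, mul_left_comm]

theorem exists_outer_product_of_mul_eq_mul [IsGCDMonoid A] (M : Matrix m n A)
    (hM : ∀ i j k l, M i j * M k l = M i l * M k j) :
    ∃ (f : m → A) (g : n → A), ∀ i j, M i j = f i * g j := by
  have := Classical.arbitrary (NormalizedGCDMonoid A)
  by_cases! h : ∀ a b, M a b = 0
  · exact ⟨fun _ ↦ 0, fun _ ↦ 0, fun i j ↦ by rw [h i j, mul_zero]⟩
  · obtain ⟨a, b, hab⟩ := h
    exact M.exists_outer_product_of_mul_eq_mul_of_ne_zero hM hab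

end Matrix

theorem stmt_7_general {A : Type*} [CommRing A] [GCDMonoid A] (n : ℕ)
    (P : Matrix (Fin n) (Fin n) A)
    (h2 : ∀ i j k l, P i j * P k l - P i l * P k j = 0) :
    ∃ f g : Fin n → A, ∀ i j, P i j = f i * g j :=
  Matrix.exists_outer_product_of_mul_eq_mul P fun i j k l ↦ sub_eq_zero.mp (h2 i j k l)

/-- Over a GCD domain, every rank-one idempotent matrix factors as an outer
product, i.e. `Pic A` is trivial. -/
theorem stmt_7 {A : Type*} [CommRing A] [IsDomain A] [GCDMonoid A] (n : ℕ)
    (P : Matrix (Fin n) (Fin n) A)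
    (h1 : P * P = P)
    (h2 : ∀ i j k l, P i j * P k l - P i l * P k j = 0)
    (h3 : ∑ i, P i i = 1) :
    ∃ f g : Fin n → A, ∀ i j, P i j = f i * g j :=
  stmt_7_general n P h2
end

section
/- Let B be a reduced commutative ring and A a subring of B such that A is seminormal. Then the conductor of A in B, 𝔞 = {x ∈ B | x·y ∈ A for all y ∈ B}, is a radical ideal of B: if u ∈ B and u² ∈ 𝔞 then u ∈ 𝔞. Concretely: if u ∈ B satisfies u²·y ∈ A for all y ∈ B, then u·y ∈ A for all y ∈ B. -/
/-!
For `y : B`, the element `t = u * y` has `t ^ 2 = u ^ 2 * y ^ 2` and `t ^ 3 = u ^ 2 * (u * y ^ 3)` in `A`.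
Seminormality of `A` yields `a ∈ A` with `a ^ 2 = t ^ 2` and `a ^ 3 = t ^ 3`; then `(a - t) ^ 3 = 0`,
so `a = t` because `B` is reduced.
-/

def IsSeminormalRing (R : Type*) [CommRing R] : Prop :=
  ∀ b c : R, b ^ 2 = c ^ 3 → ∃ a : R, a ^ 3 = b ∧ a ^ 2 = c

theorem eq_of_sq_eq_of_pow_three_eq {R : Type*} [CommRing R] [IsReduced R] {a b : R}
    (h2 : a ^ 2 = b ^ 2) (h3 : a ^ 3 = b ^ 3) : a = b := by
  have hcube : (a - b) ^ 3 = 0 := by linear_combination 4 * h3 - 3 * (a + b) * h2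
  exact sub_eq_zero.mp (eq_zero_of_pow_eq_zero hcube)

theorem IsSeminormalRing.mem_of_sq_mem_of_pow_three_mem {B : Type*} [CommRing B] [IsReduced B]
    {A : Subring B} (hA : IsSeminormalRing A) {t : B} (h2 : t ^ 2 ∈ A) (h3 : t ^ 3 ∈ A) :
    t ∈ A := by
  obtain ⟨a, ha3, ha2⟩ := hA ⟨t ^ 3, h3⟩ ⟨t ^ 2, h2⟩ (Subtype.ext (by push_cast; ring))
  have hat : (a : B) = t :=
    eq_of_sq_eq_of_pow_three_eq (congrArg Subtype.val ha2) (congrArg Subtype.val ha3)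
  exact hat ▸ a.2

/-- If `A` is a seminormal subring of a reduced commutative ring `B`, then the
conductor of `A` in `B` is a radical ideal of `B`. -/
theorem stmt_10 {B : Type*} [CommRing B] [IsReduced B] (A : Subring B)
    (hsn : ∀ b c : A, b ^ 2 = c ^ 3 → ∃ a : A, a ^ 3 = b ∧ a ^ 2 = c)
    (u : B) (hu : ∀ y : B, u ^ 2 * y ∈ A) :
    ∀ y : B, u * y ∈ A := by
  intro y
  have h2 : (u * y) ^ 2 ∈ A := by simpa only [mul_pow] using hu (y ^ 2)
  have h3 : (u * y) ^ 3 ∈ A := by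
    convert hu (u * y ^ 3) using 1
    ring
  exact IsSeminormalRing.mem_of_sq_mem_of_pow_three_mem hsn h2 h3
end

section
/- Let B be a reduced commutative ring, A a subring of B, and c₁,…,c_q ∈ B elements each integral over A such that B is generated as a ring over A by c₁,…,c_q. Let 𝔞 = {x ∈ B | x·y ∈ A for all y ∈ B} be the conductor of A in B, and assume 𝔞 is radical (u² ∈ 𝔞 implies u ∈ 𝔞). Then 𝔞 = {x ∈ A | x·c_i ∈ A for i = 1,…,q}; that is, for x ∈ B one has (x·y ∈ A for all y ∈ B) if and only if (x ∈ A and x·c_i ∈ A for all i). -/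
/-!
Fix `x` in `A` with `x * cᵢ ∈ A` for all `i`. The elements `y` with `xⁿ * y ∈ A` for some `n`
form a subring containing `A` and the `cᵢ`, hence all of `B`. As the `cᵢ` are integral, `B` is a
finite `A`-module, so a single exponent `N` works for a finite generating set and therefore for
all of `B`: `x ^ N` lies in the conductor. Radicality of the conductor brings this down to `x`.
-/

namespace Subring

variable {B : Type*} [CommRing B] (A : Subring B)

def conductor : Ideal B where
  carrier := {x | ∀ y, x * y ∈ A}
  zero_mem' y := by simp
  add_mem' ha hb y := by simpa only [add_mul] using A.add_mem (ha y) (hb y)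
  smul_mem' a x hx y := by simpa only [smul_eq_mul, mul_assoc, mul_left_comm] using hx (a * y)

variable {A} {x : B}

theorem pow_mul_mem_of_le (hx : x ∈ A) {m n : ℕ} (hmn : m ≤ n) {y : B} (hy : x ^ m * y ∈ A) :
    x ^ n * y ∈ A := by
  rw [← Nat.sub_add_cancel hmn, pow_add, mul_assoc]
  exact A.mul_mem (A.pow_mem hx _) hy

variable (A)

/-- For `x` a nonzerodivisor this is `B ∩ A[1/x]`. -/
def saturationAway (hx : x ∈ A) : Subring B where
  carrier := {y | ∃ n, x ^ n * y ∈ A}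
  zero_mem' := ⟨0, by simp⟩
  one_mem' := ⟨0, by simp⟩
  add_mem' := by
    rintro a b ⟨m, ha⟩ ⟨n, hb⟩
    refine ⟨max m n, ?_⟩
    rw [mul_add]
    exact A.add_mem (pow_mul_mem_of_le hx (le_max_left m n) ha)
      (pow_mul_mem_of_le hx (le_max_right m n) hb)
  mul_mem' := by
    rintro a b ⟨m, ha⟩ ⟨n, hb⟩
    refine ⟨m + n, ?_⟩
    rw [show x ^ (m + n) * (a * b) = (x ^ m * a) * (x ^ n * b) by ring]
    exact A.mul_mem ha hb
  neg_mem' := by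
    rintro a ⟨n, ha⟩
    exact ⟨n, by simpa only [mul_neg] using A.neg_mem ha⟩

variable {A}

theorem exists_pow_mul_mem_of_closure_eq_top {s : Set B} (hx : x ∈ A)
    (hxs : ∀ c ∈ s, x * c ∈ A) (hgen : closure ((A : Set B) ∪ s) = ⊤) (y : B) :
    ∃ n, x ^ n * y ∈ A := by
  have hle : closure ((A : Set B) ∪ s) ≤ A.saturationAway hx :=
    closure_le.2 <| Set.union_subset (fun a ha => ⟨0, by simpa using ha⟩)
      (fun c hc => ⟨1, by simpa using hxs c hc⟩)
  exact hle (hgen ▸ mem_top y)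

theorem moduleFinite_of_closure_eq_top {s : Set B} (hs : s.Finite)
    (hint : ∀ c ∈ s, IsIntegral A c) (hgen : closure ((A : Set B) ∪ s) = ⊤) :
    Module.Finite A B := by
  have hadjoin : Algebra.adjoin A s = ⊤ := by
    refine Subalgebra.toSubring_injective ?_
    rw [Algebra.adjoin_eq_ring_closure, Algebra.top_toSubring, ← hgen]
    congr
    exact Subtype.range_coe
  have hfg := fg_adjoin_of_finite hs hint
  rwa [hadjoin, Algebra.top_toSubmodule, ← Module.finite_def] at hfg

theorem exists_pow_mem_conductor [Module.Finite A B] (hx : x ∈ A)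
    (h : ∀ y, ∃ n, x ^ n * y ∈ A) : ∃ N, x ^ N ∈ A.conductor := by
  obtain ⟨s, hs⟩ := Module.Finite.fg_top (R := A) (M := B)
  choose n hn using h
  refine ⟨s.sup n, fun y => ?_⟩
  have hy : y ∈ Submodule.span A (s : Set B) := hs ▸ Submodule.mem_top
  induction hy using Submodule.span_induction with
  | mem z hz => exact pow_mul_mem_of_le hx (Finset.le_sup hz) (hn z)
  | zero => simp
  | add a b _ _ ha hb => rw [mul_add]; exact A.add_mem ha hb
  | smul a z _ hz => rw [mul_smul_comm, Subring.smul_def]; exact A.mul_mem a.2 hz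

end Subring

theorem stmt_11_general {B : Type*} [CommRing B] (A : Subring B) (q : ℕ)
    (c : Fin q → B)
    (hint : ∀ i, A.subtype.IsIntegralElem (c i))
    (hgen : Subring.closure ((A : Set B) ∪ Set.range c) = ⊤)
    (hrad : ∀ u : B, (∀ y : B, u ^ 2 * y ∈ A) → ∀ y : B, u * y ∈ A) :
    ∀ x : B, (∀ y : B, x * y ∈ A) ↔ (x ∈ A ∧ ∀ i, x * c i ∈ A) := by
  intro x
  refine ⟨fun h => ⟨by simpa using h 1, fun i => h (c i)⟩, ?_⟩
  rintro ⟨hxA, hxc⟩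
  have : Module.Finite A B := Subring.moduleFinite_of_closure_eq_top (Set.finite_range c)
    (by rintro _ ⟨i, rfl⟩; exact hint i) hgen
  have hpow := Subring.exists_pow_mul_mem_of_closure_eq_top hxA
    (by rintro _ ⟨i, rfl⟩; exact hxc i) hgen
  have hconductor : A.conductor.IsRadical :=
    (Ideal.isRadical_iff_pow_one_lt 2 one_lt_two).2 hrad
  exact hconductor (Subring.exists_pow_mem_conductor hxA hpow)

/-- If `B = A[c₁,…,c_q]` is reduced with each `c_i` integral over the subring
`A`, and the conductor of `A` in `B` is radical, then the conductor equals
`{x ∈ A | x·c_i ∈ A for all i}`. -/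
theorem stmt_11 {B : Type*} [CommRing B] [IsReduced B] (A : Subring B) (q : ℕ)
    (c : Fin q → B)
    (hint : ∀ i, A.subtype.IsIntegralElem (c i))
    (hgen : Subring.closure ((A : Set B) ∪ Set.range c) = ⊤)
    (hrad : ∀ u : B, (∀ y : B, u ^ 2 * y ∈ A) → ∀ y : B, u * y ∈ A) :
    ∀ x : B, (∀ y : B, x * y ∈ A) ↔ (x ∈ A ∧ ∀ i, x * c i ∈ A) :=
  stmt_11_general A q c hint hgen hrad
end

section
/- (Elimination of the minimal prime) Let C be a reduced commutative ring and P an n×n matrix over C[X₁,…,X_m] which is idempotent of rank 1 (P·P = P, all 2×2 minors vanish, trace P = 1) with P(0) = I_{n,1}. Assume that for every a ∈ C the following holds: if the image of P over (Localization.Away a)[X₁,…,X_m] factors as an outer product, i.e., there exist f, g : Fin n → (Localization.Away a)[X₁,…,X_m] with ∑_i g i · f i = 1 and (image of P) i j = f i · g j for all i, j, then a = 0. Then C is the trivial ring: 1 = 0 in C. -/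
/-!
Take a minimal prime `p` of `C`. Since `C` is reduced, `K = C_p` is a field, so `K[X]` is a GCD
domain, and there a matrix of trace one with vanishing `2 × 2` minors is an outer product
`f gᵀ` with `gᵀ f = 1`: extract the gcd of a row and a column through a nonzero diagonal entry.
Only finitely many denominators and identities are involved, so the factorization already
exists over `C[1/a][X]` for some `a ∉ p`. The hypothesis then forces `a = 0 ∈ p`.
-/

open Finset

theorem isUnit_of_forall_dvd_mul {ι α : Type*} [Fintype ι] [CommMonoidWithZero α]
    [NormalizedGCDMonoid α] {s : α} {f g : ι → α} (hf : univ.gcd f = 1) (hg : univ.gcd g = 1)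
    (h : ∀ i j, s ∣ f i * g j) : IsUnit s := by
  have hsg (j : ι) : s ∣ g j := by
    have hdvd : s ∣ univ.gcd (fun i => f i * g j) := dvd_gcd fun i _ => h i j
    simpa [hf] using hdvd.trans (Finset.gcd_mul_right' univ f (g j)).dvd
  exact isUnit_of_dvd_one (hg ▸ dvd_gcd fun j _ => hsg j)

theorem IsLocalization.exists_mem_forall_mul_eq_mul {R : Type*} [CommRing R] {M : Submonoid R}
    (S : Type*) [CommRing S] [Algebra R S] [IsLocalization M S] {κ : Type*} [Fintype κ]
    {x y : κ → R} (h : ∀ k, algebraMap R S (x k) = algebraMap R S (y k)) :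
    ∃ t ∈ M, ∀ k, t * x k = t * y k := by
  choose c hc using fun k => IsLocalization.exists_of_eq (M := M) (h k)
  refine ⟨∏ k, (c k : R), prod_mem fun k _ => (c k).2, fun k => ?_⟩
  obtain ⟨d, hd⟩ := dvd_prod_of_mem (fun k => (c k : R)) (mem_univ k)
  rw [hd]
  linear_combination d * hc k

namespace Matrix

variable {ι R : Type*} [Fintype ι] [CommRing R]

/-- `Q = f gᵀ` with `gᵀ f = 1`: `Q` projects onto the free rank-one summand spanned by `f`. -/
def IsOuterProduct (Q : Matrix ι ι R) : Prop :=
  ∃ f g : ι → R, ∑ i, g i * f i = 1 ∧ ∀ i j, Q i j = f i * g j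

theorem isOuterProduct_of_minors_eq_zero [IsDomain R] [IsGCDMonoid R] (Q : Matrix ι ι R)
    (hminor : ∀ i j k l, Q i j * Q k l - Q i l * Q k j = 0) (htrace : Q.trace = 1) :
    Q.IsOuterProduct := by
  let : NormalizedGCDMonoid R := Classical.arbitrary _
  obtain ⟨z, -, hz : Q z z ≠ 0⟩ :=
    exists_ne_zero_of_sum_ne_zero (htrace ▸ one_ne_zero : Q.trace ≠ 0)
  obtain ⟨f, hf, hf1⟩ := Finset.extract_gcd (fun i => Q i z) ⟨z, mem_univ z⟩
  obtain ⟨g, hg, hg1⟩ := Finset.extract_gcd (fun j => Q z j) ⟨z, mem_univ z⟩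
  set e := univ.gcd fun i => Q i z
  set h := univ.gcd fun j => Q z j
  have heh : e * h ≠ 0 := by
    intro h0
    rcases mul_eq_zero.mp h0 with he | hh
    · exact hz (by rw [hf z (mem_univ z), he, zero_mul])
    · exact hz (by rw [hg z (mem_univ z), hh, zero_mul])
  have hminor' (i j : ι) : Q i j * Q z z = e * h * (f i * g j) := by
    rw [sub_eq_zero.mp (hminor i j z z), hf i (mem_univ i), hg j (mem_univ j)]
    ring
  set s := ∑ i, f i * g i
  have hzz : Q z z = e * h * s := by
    calc Q z z = Q.trace * Q z z := by rw [htrace, one_mul]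
      _ = ∑ i, Q i i * Q z z := sum_mul ..
      _ = e * h * s := by simp only [hminor', s, mul_sum]
  have hQs (i j : ι) : Q i j * s = f i * g j :=
    mul_left_cancel₀ heh (by linear_combination hminor' i j - Q i j * hzz)
  obtain ⟨u, hu⟩ := isUnit_of_forall_dvd_mul hf1 hg1 fun i j => ⟨Q i j, by rw [← hQs]; ring⟩
  refine ⟨f, fun j => ↑u⁻¹ * g j, ?_, fun i j => ?_⟩
  · simp only [mul_assoc, ← mul_sum, mul_comm (g _), ← hu, s, Units.inv_mul]
  · calc Q i j = Q i j * s * ↑u⁻¹ := by rw [← hu, mul_assoc, Units.mul_inv, mul_one]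
      _ = f i * (↑u⁻¹ * g j) := by rw [hQs]; ring

theorem IsOuterProduct.exists_mem_of_isLocalization {M : Submonoid R} (S : Type*) [CommRing S]
    [Algebra R S] [IsLocalization M S]
    {Q : Matrix ι ι R} (hQ : (Q.map (algebraMap R S)).IsOuterProduct) :
    ∃ t ∈ M, ∀ {B : Type*} [CommRing B] (φ : R →+* B), IsUnit (φ t) →
      (Q.map φ).IsOuterProduct := by
  obtain ⟨f, g, hgf, hfg⟩ := hQ
  -- After clearing the denominators of `f, g` by `b`, the identities `∑ G F = b²` and
  -- `Q b² = F Gᵀ` hold in `R` up to factors `c₁, c₂ ∈ M`; it suffices to invert `b c₁ c₂`.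
  obtain ⟨b, hb⟩ := IsLocalization.exist_integer_multiples_of_finite M (Sum.elim f g)
  choose F hF using fun i => hb (Sum.inl i)
  choose G hG using fun i => hb (Sum.inr i)
  simp only [Sum.elim_inl, Sum.elim_inr, Algebra.smul_def] at hF hG
  have hsum : algebraMap R S (∑ i, G i * F i) = algebraMap R S (b * b) := by
    rw [map_sum, map_mul, ← mul_one (algebraMap R S b * _), ← hgf, mul_sum]
    exact sum_congr rfl fun i _ => by rw [map_mul, hF, hG]; ring
  obtain ⟨c₁, hc₁⟩ := IsLocalization.exists_of_eq (M := M) hsum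
  obtain ⟨c₂, hc₂, hc₂Q⟩ := IsLocalization.exists_mem_forall_mul_eq_mul (M := M) S
    (x := fun ij : ι × ι => Q ij.1 ij.2 * (b * b)) (y := fun ij => F ij.1 * G ij.2)
    fun ij => by simp only [map_mul, hF, hG, ← map_apply, hfg]; ring
  refine ⟨b * c₁ * c₂, mul_mem (mul_mem b.2 c₁.2) hc₂, fun φ hφ => ?_⟩
  rw [map_mul, map_mul] at hφ
  obtain ⟨⟨⟨u, hu⟩, hc₁φ⟩, hc₂φ⟩ := (IsUnit.mul_iff.mp hφ).imp_left IsUnit.mul_iff.mp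
  refine ⟨fun i => ↑u⁻¹ * φ (F i), fun j => ↑u⁻¹ * φ (G j), ?_, fun i j => ?_⟩
  · have hGF : ∑ i, φ (G i) * φ (F i) = φ b * φ b :=
      hc₁φ.mul_left_cancel (by simpa [map_sum] using congrArg φ hc₁)
    calc ∑ i, ↑u⁻¹ * φ (G i) * (↑u⁻¹ * φ (F i))
        = ↑u⁻¹ * ↑u⁻¹ * ∑ i, φ (G i) * φ (F i) := by
          rw [mul_sum]; exact sum_congr rfl fun _ _ => by ring
      _ = 1 := by rw [hGF, ← hu, mul_mul_mul_comm, Units.inv_mul, one_mul]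
  · have hFG : φ (Q i j) * (φ b * φ b) = φ (F i) * φ (G j) :=
      hc₂φ.mul_left_cancel (by simpa using congrArg φ (hc₂Q (i, j)))
    calc Q.map φ i j = φ (Q i j) * (φ b * φ b) * (↑u⁻¹ * ↑u⁻¹) := by
          rw [map_apply, ← hu, mul_assoc, mul_mul_mul_comm, Units.mul_inv, one_mul, mul_one]
      _ = ↑u⁻¹ * φ (F i) * (↑u⁻¹ * φ (G j)) := by rw [hFG]; ring

end Matrix

attribute [local instance] MvPolynomial.algebraMvPolynomial

theorem stmt_12_general {C : Type*} [CommRing C] [IsReduced C] (n m : ℕ)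
    (P : Matrix (Fin n) (Fin n) (MvPolynomial (Fin m) C))
    (h2 : ∀ i j k l, P i j * P k l - P i l * P k j = 0)
    (h3 : ∑ i, P i i = 1)
    (H : ∀ a : C,
      (∃ f g : Fin n → MvPolynomial (Fin m) (Localization.Away a),
        (∑ i, g i * f i = 1) ∧
        ∀ i j, MvPolynomial.map (algebraMap C (Localization.Away a)) (P i j) =
          f i * g j) →
      a = 0) :
    (1 : C) = 0 := by
  by_contra hC
  have : Nontrivial C := nontrivial_of_ne 1 0 hC
  obtain ⟨p, hp⟩ := Ideal.nonempty_minimalPrimes (I := (⊥ : Ideal C)) top_ne_bot.symm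
  have : p.IsPrime := hp.1.1
  let K := Localization.AtPrime p
  have := Ring.KrullDimLE.of_isLocalization p hp K
  let : Field K := Ring.KrullDimLE.isField_of_isReduced.toField
  let φ : MvPolynomial (Fin m) C →+* MvPolynomial (Fin m) K := algebraMap _ _
  have hK : (P.map φ).IsOuterProduct := by
    refine Matrix.isOuterProduct_of_minors_eq_zero _ (fun i j k l => ?_) ?_
    · simpa using congrArg φ (h2 i j k l)
    · simpa [Matrix.trace] using congrArg φ h3
  obtain ⟨_, ⟨a, ha, rfl⟩, hfree⟩ :=
    hK.exists_mem_of_isLocalization (M := p.primeCompl.map (MvPolynomial.C (σ := Fin m))) _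
  let L := Localization.Away a
  have hunit : IsUnit (MvPolynomial.map (σ := Fin m) (algebraMap C L) (MvPolynomial.C a)) := by
    simpa using (IsLocalization.Away.algebraMap_isUnit a).map (MvPolynomial.C (σ := Fin m) (R := L))
  exact ha (H a (hfree _ hunit) ▸ p.zero_mem)

/-- Elimination of the minimal prime: if for every `a : C` the fact that `Im P`
becomes free (factors as an outer product) over `C[1/a][X₁,…,X_m]` forces
`a = 0`, then the reduced ring `C` is trivial. -/
theorem stmt_12 {C : Type*} [CommRing C] [IsReduced C] (n m : ℕ)
    (P : Matrix (Fin n) (Fin n) (MvPolynomial (Fin m) C))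
    (h1 : P * P = P)
    (h2 : ∀ i j k l, P i j * P k l - P i l * P k j = 0)
    (h3 : ∑ i, P i i = 1)
    (h0 : ∀ i j, MvPolynomial.eval (fun _ => (0 : C)) (P i j) =
      if (i : ℕ) = 0 ∧ (j : ℕ) = 0 then 1 else 0)
    (H : ∀ a : C,
      (∃ f g : Fin n → MvPolynomial (Fin m) (Localization.Away a),
        (∑ i, g i * f i = 1) ∧
        ∀ i j, MvPolynomial.map (algebraMap C (Localization.Away a)) (P i j) =
          f i * g j) →
      a = 0) :
    (1 : C) = 0 :=
  stmt_12_general n m P h2 h3 H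
end

section
/- A commutative ring A is zero-dimensional and reduced if and only if every element of A has a quasi-inverse. Precisely: (A is reduced and for every x ∈ A there exist a ∈ A and d ∈ ℕ with x^d = a·x^(d+1)) if and only if (for every a ∈ A there exists b ∈ A with a²·b = a and b²·a = b). -/
/-!
If `x ^ d = a * x ^ (d + 1)`, then `x - a * x ^ 2 = x * (1 - a * x)` has vanishing
`(d + 1)`-st power, so in a reduced ring `x = a * x ^ 2` and `a ^ 2 * x` is a quasi-inverse of `x`. Conversely,
`x ^ 2 * b = x` gives `x = x ^ (n + 1) * b ^ n` for every `n`, which rules out nonzero nilpotents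
and is the case `d = 1` of zero-dimensionality.
-/

section CommMonoid

variable {M : Type*} [CommMonoid M]

theorem exists_quasiInverse_of_mul_sq_eq {x a : M} (h : a * x ^ 2 = x) :
    ∃ b : M, x ^ 2 * b = x ∧ b ^ 2 * x = b := by
  refine ⟨a ^ 2 * x, ?_, ?_⟩
  · calc x ^ 2 * (a ^ 2 * x) = a * x * (a * x ^ 2) := by simp only [sq]; ac_rfl
      _ = x := by rw [h, mul_assoc, ← sq, h]
  · calc (a ^ 2 * x) ^ 2 * x = a ^ 2 * (a * (a * x ^ 2) * x) := by simp only [sq]; ac_rfl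
      _ = a ^ 2 * x := by rw [h, mul_assoc, ← sq, h]

theorem pow_succ_mul_pow_eq_self {x b : M} (h : x ^ 2 * b = x) (n : ℕ) :
    x ^ (n + 1) * b ^ n = x := by
  induction n with
  | zero => simp
  | succ n ih =>
    calc x ^ (n + 1 + 1) * b ^ (n + 1) = x ^ n * b ^ n * (x ^ 2 * b) := by
          rw [pow_succ x (n + 1), pow_succ x n, pow_succ b n, sq]; ac_rfl
      _ = x := by rw [h, mul_right_comm, ← pow_succ, ih]

end CommMonoid

theorem isReduced_of_forall_exists_sq_mul_eq {M : Type*} [CommMonoidWithZero M]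
    (h : ∀ x : M, ∃ b : M, x ^ 2 * b = x) : IsReduced M := by
  refine ⟨fun x ⟨n, hn⟩ => ?_⟩
  obtain ⟨b, hb⟩ := h x
  rw [← pow_succ_mul_pow_eq_self hb n, pow_succ', hn, mul_zero, zero_mul]

theorem IsReduced.mul_sq_eq_of_pow_eq {R : Type*} [CommRing R] [IsReduced R] {x a : R} {d : ℕ}
    (h : x ^ d = a * x ^ (d + 1)) : a * x ^ 2 = x := by
  have hd : x ^ d * (1 - a * x) = 0 := by linear_combination h
  have hnil : (x - a * x ^ 2) ^ (d + 1) = 0 := by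
    calc (x - a * x ^ 2) ^ (d + 1) = x ^ (d + 1) * (1 - a * x) ^ (d + 1) := by
          rw [← mul_pow]; ring
      _ = x ^ d * (1 - a * x) * (x * (1 - a * x) ^ d) := by ring
      _ = 0 := by rw [hd, zero_mul]
  linear_combination -(IsNilpotent.eq_zero ⟨d + 1, hnil⟩ : x - a * x ^ 2 = 0)

/-- A commutative ring is zero-dimensional and reduced iff every element has a
quasi-inverse. -/
theorem stmt_13 {A : Type*} [CommRing A] :
    (IsReduced A ∧ ∀ x : A, ∃ a : A, ∃ d : ℕ, x ^ d = a * x ^ (d + 1)) ↔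
    (∀ a : A, ∃ b : A, a ^ 2 * b = a ∧ b ^ 2 * a = b) := by
  constructor
  · rintro ⟨hred, hzd⟩ x
    obtain ⟨a, d, hd⟩ := hzd x
    exact exists_quasiInverse_of_mul_sq_eq (hred.mul_sq_eq_of_pow_eq hd)
  · intro hq
    choose b hb _ using hq
    refine ⟨isReduced_of_forall_exists_sq_mul_eq fun x => ⟨b x, hb x⟩,
      fun x => ⟨b x, 1, ?_⟩⟩
    rw [pow_one, mul_comm, hb]
end

section
/- Let C be a reduced commutative ring in which every element has a quasi-inverse (for each x ∈ C there is x• with x²·x• = x and x·(x•)² = x•), and let A be a subring of C. Let D be the subring of C generated by A together with the quasi-inverses x• of all elements x ∈ A. Then D is zero-dimensional reduced: every element of D has a quasi-inverse lying in D. -/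
/-!
If `s` is a quasi-inverse of `a`, then `e = a * s` is idempotent and splits every ring `B[s]`
(`B ∋ a`) into two corners: on `1 - e` nothing changes, while on `e` the element `a` becomes a
unit with inverse `s`. Hence every element of `B[s]` has the form `b (1 - e) + q sⁿ e` with
`b, q ∈ B`, and its quasi-inverse is read off corner by corner as `b' (1 - e) + q' aⁿ e`.
Adjoining finitely many quasi-inverses one at a time gives the theorem, since every element of
the generated ring lies in such a finite adjunction.
-/

def IsQuasiInverse {M : Type*} [Monoid M] (x b : M) : Prop :=
  x ^ 2 * b = x ∧ b ^ 2 * x = b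

def quasiInverses {M : Type*} [Monoid M] (A : Set M) : Set M :=
  {b | ∃ x ∈ A, IsQuasiInverse x b}

namespace IsQuasiInverse

section CommMonoid

variable {M : Type*} [CommMonoid M] {x x' y y' : M}

theorem symm (h : IsQuasiInverse x x') : IsQuasiInverse x' x :=
  ⟨h.2, h.1⟩

theorem one : IsQuasiInverse (1 : M) 1 :=
  ⟨by simp, by simp⟩

theorem mul (hx : IsQuasiInverse x x') (hy : IsQuasiInverse y y') :
    IsQuasiInverse (x * y) (x' * y') := by
  constructor
  · calc (x * y) ^ 2 * (x' * y') = (x ^ 2 * x') * (y ^ 2 * y') := by rw [mul_pow]; ac_rfl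
      _ = x * y := by rw [hx.1, hy.1]
  · calc (x' * y') ^ 2 * (x * y) = (x' ^ 2 * x) * (y' ^ 2 * y) := by rw [mul_pow]; ac_rfl
      _ = x' * y' := by rw [hx.2, hy.2]

theorem pow (h : IsQuasiInverse x x') (n : ℕ) : IsQuasiInverse (x ^ n) (x' ^ n) := by
  induction n with
  | zero => simpa using one
  | succ n ih => simpa only [pow_succ] using ih.mul h

theorem isIdempotentElem_mul (h : IsQuasiInverse x x') : IsIdempotentElem (x * x') :=
  calc x * x' * (x * x') = x ^ 2 * x' * x' := by rw [sq]; ac_rfl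
    _ = x * x' := by rw [h.1]

theorem pow_mul_pow_mul_mul (h : IsQuasiInverse x x') (n : ℕ) :
    x ^ n * x' ^ n * (x * x') = x * x' := by
  rw [← mul_pow, ← pow_succ, h.isIdempotentElem_mul.pow_succ_eq]

end CommMonoid

section CommRing

variable {R : Type*} [CommRing R]

theorem sq_mul_add_mul_idempotent {e x x' y y' : R} (he : IsIdempotentElem e)
    (hx : x ^ 2 * x' = x) (hy : y ^ 2 * y' = y) :
    (x * (1 - e) + y * e) ^ 2 * (x' * (1 - e) + y' * e) = x * (1 - e) + y * e := by
  have hsq : (x * (1 - e) + y * e) ^ 2 = x ^ 2 * (1 - e) + y ^ 2 * e := by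
    linear_combination (x - y) ^ 2 * he.eq
  rw [hsq]
  linear_combination (1 - e) * hx + e * hy + (x ^ 2 - y ^ 2) * (x' - y') * he.eq

theorem add_mul_idempotent {e x x' y y' : R} (he : IsIdempotentElem e)
    (hx : IsQuasiInverse x x') (hy : IsQuasiInverse y y') :
    IsQuasiInverse (x * (1 - e) + y * e) (x' * (1 - e) + y' * e) :=
  ⟨sq_mul_add_mul_idempotent he hx.1 hy.1, sq_mul_add_mul_idempotent he hx.2 hy.2⟩

end CommRing

end IsQuasiInverse

namespace Subring

theorem exists_finset_of_mem_closure_union {R : Type*} [Ring R] {A S : Set R} {x : R}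
    (hx : x ∈ closure (A ∪ S)) : ∃ F : Finset R, ↑F ⊆ S ∧ x ∈ closure (A ∪ ↑F) := by
  classical
  let T : {F : Finset R // ↑F ⊆ S} → Subring R := fun F => closure (A ∪ ↑F.1)
  have : Nonempty {F : Finset R // ↑F ⊆ S} := ⟨⟨∅, by simp⟩⟩
  have hT : Directed (· ≤ ·) T := fun F G =>
    ⟨⟨F.1 ∪ G.1, by simp [F.2, G.2]⟩,
      closure_mono (by simp only [Finset.coe_union]; tauto_set),
      closure_mono (by simp only [Finset.coe_union]; tauto_set)⟩
  have hle : closure (A ∪ S) ≤ ⨆ F, T F := closure_le.2 fun y hy => hy.elim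
    (fun hA => le_iSup T ⟨∅, by simp⟩ (subset_closure (Or.inl hA)))
    (fun hS => le_iSup T ⟨{y}, by simpa using hS⟩ (subset_closure (Or.inr (by simp))))
  obtain ⟨F, hF⟩ := (mem_iSup_of_directed hT).1 (hle hx)
  exact ⟨F.1, F.2, hF⟩

section CommRing

variable {R : Type*} [CommRing R]

theorem exists_eq_add_mul_pow_of_mem_closure_insert {B : Subring R} {a s : R} (haB : a ∈ B)
    (h : IsQuasiInverse a s) {p : R} (hp : p ∈ closure (insert s (B : Set R))) :
    ∃ b ∈ B, ∃ q ∈ B, ∃ n : ℕ, p = b * (1 - a * s) + q * s ^ n * (a * s) := by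
  induction hp using closure_induction with
  | mem x hx =>
    rcases hx with rfl | hx
    · exact ⟨0, zero_mem _, 1, one_mem _, 1, by linear_combination -h.2⟩
    · exact ⟨x, hx, x, hx, 0, by ring⟩
  | zero => exact ⟨0, zero_mem _, 0, zero_mem _, 0, by ring⟩
  | one => exact ⟨1, one_mem _, 1, one_mem _, 0, by ring⟩
  | add x y _ _ hx hy =>
    obtain ⟨b, hb, q, hq, n, rfl⟩ := hx
    obtain ⟨b', hb', q', hq', m, rfl⟩ := hy
    refine ⟨b + b', add_mem hb hb', q * a ^ m + q' * a ^ n,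
      add_mem (mul_mem hq (pow_mem haB m)) (mul_mem hq' (pow_mem haB n)), n + m, ?_⟩
    linear_combination
      -(q * s ^ n) * h.pow_mul_pow_mul_mul m - (q' * s ^ m) * h.pow_mul_pow_mul_mul n
  | neg x _ hx =>
    obtain ⟨b, hb, q, hq, n, rfl⟩ := hx
    exact ⟨-b, neg_mem hb, -q, neg_mem hq, n, by ring⟩
  | mul x y _ _ hx hy =>
    obtain ⟨b, hb, q, hq, n, rfl⟩ := hx
    obtain ⟨b', hb', q', hq', m, rfl⟩ := hy
    refine ⟨b * b', mul_mem hb hb', q * q', mul_mem hq hq', n + m, ?_⟩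
    linear_combination (b - q * s ^ n) * (b' - q' * s ^ m) * h.isIdempotentElem_mul.eq

theorem exists_isQuasiInverse_of_mem_closure_insert {B D : Subring R} {a s : R} (haB : a ∈ B)
    (haD : a ∈ D) (hsD : s ∈ D) (h : IsQuasiInverse a s)
    (hB : ∀ x ∈ B, ∃ y ∈ D, IsQuasiInverse x y) {p : R}
    (hp : p ∈ closure (insert s (B : Set R))) : ∃ y ∈ D, IsQuasiInverse p y := by
  obtain ⟨b, hb, q, hq, n, rfl⟩ := exists_eq_add_mul_pow_of_mem_closure_insert haB h hp
  obtain ⟨b', hb'D, hbb'⟩ := hB b hb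
  obtain ⟨q', hq'D, hqq'⟩ := hB q hq
  have heD : a * s ∈ D := mul_mem haD hsD
  exact ⟨b' * (1 - a * s) + q' * a ^ n * (a * s),
    add_mem (mul_mem hb'D (sub_mem (one_mem _) heD)) (mul_mem (mul_mem hq'D (pow_mem haD n)) heD),
    hbb'.add_mul_idempotent h.isIdempotentElem_mul (hqq'.mul (h.symm.pow n))⟩

theorem exists_isQuasiInverse_of_mem_closure_union_finset {A : Subring R}
    (hA : ∀ x ∈ A, ∃ y, IsQuasiInverse x y) {F : Finset R} (hF : ↑F ⊆ quasiInverses (A : Set R))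
    {d : R} (hd : d ∈ closure (A ∪ ↑F)) :
    ∃ y ∈ closure (A ∪ quasiInverses A), IsQuasiInverse d y := by
  classical
  induction F using Finset.induction_on generalizing d with
  | empty =>
    rw [Finset.coe_empty, Set.union_empty, closure_eq] at hd
    obtain ⟨y, hy⟩ := hA d hd
    exact ⟨y, subset_closure (Or.inr ⟨d, hd, hy⟩), hy⟩
  | insert s F _ ih =>
    obtain ⟨a, haA, has⟩ := hF (Finset.mem_insert_self s F)
    have hclosure : closure (A ∪ ↑(insert s F)) ≤
        closure (insert s (closure ((A : Set R) ∪ ↑F) : Set R)) :=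
      closure_mono <| by
        rw [Finset.coe_insert, Set.union_insert]
        exact Set.insert_subset_insert subset_closure
    exact exists_isQuasiInverse_of_mem_closure_insert
      (D := closure ((A : Set R) ∪ quasiInverses A)) (subset_closure (Or.inl haA))
      (subset_closure (Or.inl haA)) (subset_closure (Or.inr ⟨a, haA, has⟩)) has
      (fun x hx => ih (fun y hy => hF (Finset.mem_insert_of_mem hy)) hx) (hclosure hd)

theorem exists_isQuasiInverse_of_mem_closure_quasiInverses {A : Subring R}
    (hA : ∀ x ∈ A, ∃ y, IsQuasiInverse x y) {d : R}
    (hd : d ∈ closure (A ∪ quasiInverses A)) :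
    ∃ y ∈ closure (A ∪ quasiInverses A), IsQuasiInverse d y :=
  let ⟨_, hFS, hdF⟩ := exists_finset_of_mem_closure_union hd
  exists_isQuasiInverse_of_mem_closure_union_finset hA hFS hdF

end CommRing

end Subring

theorem stmt_15_general {C : Type*} [CommRing C]
    (hqi : ∀ x : C, ∃ b : C, x ^ 2 * b = x ∧ x * b ^ 2 = b)
    (A : Subring C) :
    ∀ d ∈ Subring.closure
        ((A : Set C) ∪ {b : C | ∃ x ∈ A, x ^ 2 * b = x ∧ b ^ 2 * x = b}),
      ∃ b ∈ Subring.closure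
        ((A : Set C) ∪ {b : C | ∃ x ∈ A, x ^ 2 * b = x ∧ b ^ 2 * x = b}),
        d ^ 2 * b = d ∧ b ^ 2 * d = b := by
  have hA : ∀ x ∈ A, ∃ y, IsQuasiInverse x y := fun x _ =>
    (hqi x).imp fun b hb => ⟨hb.1, by rw [mul_comm]; exact hb.2⟩
  exact fun d hd => Subring.exists_isQuasiInverse_of_mem_closure_quasiInverses hA hd

/-- If `C` is zero-dimensional reduced and `A ⊆ C` is a subring, the subring of
`C` generated by `A` and the quasi-inverses of the elements of `A` is itself
zero-dimensional reduced: each of its elements has a quasi-inverse inside it. -/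
theorem stmt_15 {C : Type*} [CommRing C] [IsReduced C]
    (hqi : ∀ x : C, ∃ b : C, x ^ 2 * b = x ∧ x * b ^ 2 = b)
    (A : Subring C) :
    ∀ d ∈ Subring.closure
        ((A : Set C) ∪ {b : C | ∃ x ∈ A, x ^ 2 * b = x ∧ b ^ 2 * x = b}),
      ∃ b ∈ Subring.closure
        ((A : Set C) ∪ {b : C | ∃ x ∈ A, x ^ 2 * b = x ∧ b ^ 2 * x = b}),
        d ^ 2 * b = d ∧ b ^ 2 * d = b :=
  stmt_15_general hqi A
end

section
/- Every reduced commutative ring embeds in a zero-dimensional reduced ring: for every reduced commutative ring A there exist a commutative ring C and an injective ring homomorphism A → C such that C is reduced and every element of C has a quasi-inverse (for each c ∈ C there is b ∈ C with c²·b = c and b²·c = b). -/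
/-!
A ring embeds, modulo its nilradical, into the product of the fraction fields `Frac(A ⧸ 𝔭)`
over all primes `𝔭`, because the nilradical is the intersection of the primes. A product of
fields is reduced, and the pointwise inverse (with `0⁻¹ = 0`) is a quasi-inverse there.
-/

theorem sq_mul_inv_self {G₀ : Type*} [GroupWithZero G₀] (a : G₀) : a ^ 2 * a⁻¹ = a := by
  rw [sq, mul_self_mul_inv]

theorem inv_sq_mul_self {G₀ : Type*} [GroupWithZero G₀] (a : G₀) : a⁻¹ ^ 2 * a = a⁻¹ := by
  simpa only [sq, inv_inv] using mul_self_mul_inv a⁻¹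

theorem Pi.exists_quasiInverse {ι : Type*} {G : ι → Type*} [∀ i, GroupWithZero (G i)]
    (c : ∀ i, G i) : ∃ b, c ^ 2 * b = c ∧ b ^ 2 * c = b :=
  ⟨c⁻¹, funext fun i => sq_mul_inv_self (c i), funext fun i => inv_sq_mul_self (c i)⟩

section PiFractionRing

variable (A : Type*) [CommRing A]

noncomputable def toPiFractionRing : A →+* ∀ p : PrimeSpectrum A, FractionRing (A ⧸ p.asIdeal) :=
  RingHom.pi fun p => (algebraMap (A ⧸ p.asIdeal) _).comp (Ideal.Quotient.mk p.asIdeal)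

theorem ker_toPiFractionRing : RingHom.ker (toPiFractionRing A) = nilradical A := by
  ext a
  simp [toPiFractionRing, RingHom.mem_ker, funext_iff, PrimeSpectrum.nilradical_eq_iInf,
    Ideal.Quotient.eq_zero_iff_mem]

theorem toPiFractionRing_injective [IsReduced A] : Function.Injective (toPiFractionRing A) := by
  rw [RingHom.injective_iff_ker_eq_bot, ker_toPiFractionRing, nilradical_eq_zero]
  rfl

end PiFractionRing

/-- Every reduced commutative ring embeds into a zero-dimensional reduced ring. -/
theorem stmt_16 {A : Type u} [CommRing A] [IsReduced A] :
    ∃ (C : Type u) (_ : CommRing C) (f : A →+* C),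
      Function.Injective f ∧ IsReduced C ∧
        ∀ c : C, ∃ b : C, c ^ 2 * b = c ∧ b ^ 2 * c = b :=
  ⟨_, inferInstance, toPiFractionRing A, toPiFractionRing_injective A, inferInstance,
    Pi.exists_quasiInverse⟩
end

section
/- Let C be a reduced commutative ring in which every element has a quasi-inverse (a zero-dimensional reduced ring). Then every projective module of constant rank 1 over C[X₁,…,X_m] is free; concretely, for every n×n matrix P over C[X₁,…,X_m] which is idempotent of rank 1 (P·P = P, all 2×2 minors P i j·P k l − P i l·P k j vanish, trace P = 1), there exist f, g : Fin n → C[X₁,…,X_m] such that P i j = f i · g j for all i, j. -/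
/-!
Over a GCD domain, a matrix whose 2×2 minors vanish is an outer product: all its rows are
multiples of a nonzero row divided by the gcd of that row's entries. For a maximal ideal `M`
of `C`, the ring `(C ⧸ M)[X₁,…,X_m]` is a UFD, so `P` factors modulo `M`. The difference between
`P` and the lift of this factorization has finitely many coefficients, all in `M`, and
regularity gives one idempotent `u ∉ M` that kills all of them, so `P` factors on the direct
factor `u · C[X₁,…,X_m]`. Factorizations on idempotents `a` and `b` glue to one on `a + b - a b`.
No maximal ideal contains all the idempotents obtained this way, so finitely many of them glue
to a factorization on `1`.
-/

theorem exists_outer_product_of_minors_eq_zero {R ι κ : Type*} [CommRing R] [IsDomain R]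
    [NormalizedGCDMonoid R] [Fintype κ] (P : Matrix ι κ R)
    (hP : ∀ i j k l, P i j * P k l - P i l * P k j = 0) :
    ∃ (f : ι → R) (g : κ → R), ∀ i j, P i j = f i * g j := by
  by_cases! hzero : ∀ i j, P i j = 0
  · exact ⟨0, 0, fun i j => by simp [hzero]⟩
  obtain ⟨a, b, hab⟩ := hzero
  obtain ⟨v, hv, hv1⟩ := Finset.extract_gcd (P a) (Finset.univ_nonempty_iff.mpr ⟨b⟩)
  set d := Finset.univ.gcd (P a)
  have hrow : ∀ j, P a j = d * v j := fun j => hv j (Finset.mem_univ j)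
  have hd : d ≠ 0 := fun h => hab (by rw [hrow, h, zero_mul])
  have hvb : v b ≠ 0 := fun h => hab (by rw [hrow, h, mul_zero])
  have hprop : ∀ i j, P i b * v j = P i j * v b := fun i j => mul_left_cancel₀ hd <| by
    linear_combination hP i b a j - P i b * hrow j + P i j * hrow b
  have hdvd : ∀ i, v b ∣ P i b := fun i => by
    have : v b ∣ Finset.univ.gcd (fun j => P i b * v j) :=
      Finset.dvd_gcd fun j _ => ⟨P i j, by rw [hprop, mul_comm]⟩
    rwa [(Finset.gcd_mul_left' _ _ _).dvd_iff_dvd_right, hv1, mul_one] at this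
  choose f hf using hdvd
  exact ⟨f, v, fun i j => mul_left_cancel₀ hvb <| by
    linear_combination -hprop i j + v j * hf i⟩

/-- For an idempotent `a`, this says that `P` is an outer product over the factor ring
`a A ≅ A[1/a]`. -/
def IsOuterProductOn {A ι κ : Type*} [CommRing A] (P : Matrix ι κ A) (a : A) : Prop :=
  ∃ (f : ι → A) (g : κ → A), ∀ i j, a * P i j = a * (f i * g j)

theorem IsOuterProductOn.add_sub_mul {A ι κ : Type*} [CommRing A] {P : Matrix ι κ A} {a b : A}
    (ha : IsIdempotentElem a) (hPa : IsOuterProductOn P a) (hPb : IsOuterProductOn P b) :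
    IsOuterProductOn P (a + b - a * b) := by
  obtain ⟨fa, ga, hfga⟩ := hPa
  obtain ⟨fb, gb, hfgb⟩ := hPb
  -- `a + b - a b = a + (1 - a) b` and `a (1 - a) = 0`
  refine ⟨fun i => a * fa i + (1 - a) * fb i, fun j => a * ga j + (1 - a) * gb j, fun i j => ?_⟩
  have := hfga i j
  have := hfgb i j
  have := ha.eq
  grind

theorem one_mem_of_forall_isMaximal_exists_notMem {R : Type*} [CommRing R] (S : Set R)
    (hidem : ∀ e ∈ S, IsIdempotentElem e) (h0 : 0 ∈ S)
    (hsup : ∀ a ∈ S, ∀ b ∈ S, a + b - a * b ∈ S)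
    (hmax : ∀ M : Ideal R, M.IsMaximal → ∃ e ∈ S, e ∉ M) : 1 ∈ S := by
  let I : Ideal R :=
    { carrier := {x | ∃ e ∈ S, x * e = x}
      zero_mem' := ⟨0, h0, mul_zero 0⟩
      add_mem' := by
        rintro x y ⟨a, ha, hxa⟩ ⟨b, hb, hyb⟩
        refine ⟨a + b - a * b, hsup a ha b hb, ?_⟩
        linear_combination (1 - b) * hxa + (1 - a) * hyb
      smul_mem' := by
        rintro c x ⟨e, he, hxe⟩
        exact ⟨e, he, by rw [smul_eq_mul, mul_assoc, hxe]⟩ }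
  have hI : I = ⊤ := by
    by_contra hI
    obtain ⟨M, hM, hIM⟩ := Ideal.exists_le_maximal I hI
    obtain ⟨e, he, heM⟩ := hmax M hM
    exact heM (hIM ⟨e, he, hidem e he⟩)
  obtain ⟨e, he, h1e⟩ : (1 : R) ∈ I := hI ▸ Submodule.mem_top
  rw [one_mul] at h1e
  exact h1e ▸ he

section Regular

variable {R : Type*} [CommRing R] (hreg : ∀ x : R, ∃ b, x ^ 2 * b = x) {M : Ideal R}
include hreg

theorem exists_isIdempotentElem_notMem_mul_eq_zero (hM : M.IsPrime) {x : R} (hx : x ∈ M) :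
    ∃ u, IsIdempotentElem u ∧ u ∉ M ∧ u * x = 0 := by
  obtain ⟨b, hb⟩ := hreg x
  refine ⟨1 - x * b, ?_, fun hu => hM.ne_top ?_, by linear_combination -hb⟩
  · rw [isIdempotentElem_iff]
    linear_combination b * hb
  · rw [Ideal.eq_top_iff_one, ← sub_add_cancel 1 (x * b)]
    exact M.add_mem hu (M.mul_mem_right b hx)

theorem exists_isIdempotentElem_notMem_forall_mul_eq_zero (hM : M.IsPrime) (T : Finset R)
    (hT : ∀ x ∈ T, x ∈ M) : ∃ u, IsIdempotentElem u ∧ u ∉ M ∧ ∀ x ∈ T, u * x = 0 := by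
  classical
  induction T using Finset.induction_on with
  | empty => exact ⟨1, .one, (Ideal.ne_top_iff_one M).mp hM.ne_top, by simp⟩
  | insert y T _ ih =>
    obtain ⟨u, hu, huM, huT⟩ := ih fun x hx => hT x (Finset.mem_insert_of_mem hx)
    obtain ⟨w, hw, hwM, hwy⟩ :=
      exists_isIdempotentElem_notMem_mul_eq_zero hreg hM (hT y (Finset.mem_insert_self y T))
    refine ⟨w * u, hw.mul hu, hM.mul_notMem hwM huM, fun x hx => ?_⟩
    rcases Finset.mem_insert.mp hx with rfl | hx
    · rw [mul_right_comm, hwy, zero_mul]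
    · rw [mul_assoc, huT x hx, mul_zero]

open MvPolynomial in
theorem exists_isIdempotentElem_notMem_forall_C_mul_eq_zero {ι σ : Type*} [Fintype ι]
    (hM : M.IsPrime) (q : ι → MvPolynomial σ R)
    (hq : ∀ i, map (Ideal.Quotient.mk M) (q i) = 0) :
    ∃ u, IsIdempotentElem u ∧ u ∉ M ∧ ∀ i, C u * q i = 0 := by
  classical
  obtain ⟨u, hu, huM, hkill⟩ := exists_isIdempotentElem_notMem_forall_mul_eq_zero hreg hM
    (Finset.univ.biUnion fun i => (q i).coeffs) <| by
      simp only [Finset.mem_biUnion, Finset.mem_univ, true_and, mem_coeffs_iff]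
      rintro _ ⟨i, d, -, rfl⟩
      simpa [coeff_map, Ideal.Quotient.eq_zero_iff_mem] using congrArg (coeff d) (hq i)
  refine ⟨u, hu, huM, fun i => MvPolynomial.ext _ _ fun d => ?_⟩
  rw [coeff_C_mul, coeff_zero]
  by_cases hd : coeff d (q i) = 0
  · rw [hd, mul_zero]
  · exact hkill _ (Finset.mem_biUnion.mpr ⟨i, Finset.mem_univ i, coeff_mem_coeffs d hd⟩)

open MvPolynomial in
theorem exists_isOuterProductOn_C_notMem {ι κ σ : Type*} [Fintype ι] [Fintype κ]
    (hM : M.IsMaximal) (P : Matrix ι κ (MvPolynomial σ R))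
    (hP : ∀ i j k l, P i j * P k l - P i l * P k j = 0) :
    ∃ u, IsIdempotentElem u ∧ u ∉ M ∧ IsOuterProductOn P (C u) := by
  classical
  let := Ideal.Quotient.field M
  let := UniqueFactorizationMonoid.strongNormalizationMonoid (α := MvPolynomial σ (R ⧸ M))
  let := UniqueFactorizationMonoid.toNormalizedGCDMonoid (MvPolynomial σ (R ⧸ M))
  let Φ : MvPolynomial σ R →+* MvPolynomial σ (R ⧸ M) := map (Ideal.Quotient.mk M)
  obtain ⟨f, g, hfg⟩ := exists_outer_product_of_minors_eq_zero (P.map Φ) fun i j k l => by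
    simpa using congrArg Φ (hP i j k l)
  have hΦ : Function.Surjective Φ := map_surjective _ Ideal.Quotient.mk_surjective
  choose F hF using fun i => hΦ (f i)
  choose G hG using fun j => hΦ (g j)
  obtain ⟨u, hu, huM, hkill⟩ := exists_isIdempotentElem_notMem_forall_C_mul_eq_zero hreg
    hM.isPrime (fun ij : ι × κ => P ij.1 ij.2 - F ij.1 * G ij.2) fun ij => by
      show Φ _ = 0
      rw [map_sub, map_mul, hF, hG, ← hfg, Matrix.map_apply, sub_self]
  exact ⟨u, hu, huM, F, G, fun i j => by linear_combination hkill (i, j)⟩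

end Regular

theorem stmt_17_general {C : Type*} [CommRing C]
    (hqi : ∀ x : C, ∃ b : C, x ^ 2 * b = x ∧ b ^ 2 * x = b)
    (n m : ℕ) (P : Matrix (Fin n) (Fin n) (MvPolynomial (Fin m) C))
    (h2 : ∀ i j k l, P i j * P k l - P i l * P k j = 0) :
    ∃ f g : Fin n → MvPolynomial (Fin m) C, ∀ i j, P i j = f i * g j := by
  have hreg : ∀ x : C, ∃ b, x ^ 2 * b = x := fun x => (hqi x).imp fun _ => And.left
  have hgood : (1 : C) ∈ {u : C | IsIdempotentElem u ∧ IsOuterProductOn P (MvPolynomial.C u)} :=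
    one_mem_of_forall_isMaximal_exists_notMem _ (fun _ h => h.1) ⟨.zero, 0, 0, by simp⟩
      (fun a ha b hb => ⟨ha.1.add_sub_mul hb.1, by
        simpa using IsOuterProductOn.add_sub_mul (ha.1.map MvPolynomial.C) ha.2 hb.2⟩)
      fun M hM => by
        obtain ⟨u, hu, huM, hPu⟩ := exists_isOuterProductOn_C_notMem hreg hM P h2
        exact ⟨u, ⟨hu, hPu⟩, huM⟩
  obtain ⟨f, g, hfg⟩ := hgood.2
  exact ⟨f, g, by simpa using hfg⟩

/-- Over a zero-dimensional reduced ring `C`, every rank-one idempotent matrix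
over `C[X₁,…,X_m]` factors as an outer product (projective modules of constant
rank one over `C[X₁,…,X_m]` are free). -/
theorem stmt_17 {C : Type*} [CommRing C] [IsReduced C]
    (hqi : ∀ x : C, ∃ b : C, x ^ 2 * b = x ∧ b ^ 2 * x = b)
    (n m : ℕ) (P : Matrix (Fin n) (Fin n) (MvPolynomial (Fin m) C))
    (h1 : P * P = P)
    (h2 : ∀ i j k l, P i j * P k l - P i l * P k j = 0)
    (h3 : ∑ i, P i i = 1) :
    ∃ f g : Fin n → MvPolynomial (Fin m) C, ∀ i j, P i j = f i * g j :=
  stmt_17_general hqi n m P h2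
end

section
/- Let A be a commutative pp-ring: for every x ∈ A there exists an idempotent e with Ann(x) = ⟨1 − e⟩ (the annihilator of x is generated by an idempotent). Let n ≥ 1 and let P be an n×n matrix over A whose trace is a regular element (a non-zero-divisor). Then there exists an n×n matrix J over A with J·J = I_n such that the (1,1) entry of J·P·J is a regular element of A. -/
/-!
Choose idempotents `eᵢ` with `Ann(Pᵢᵢ) = ⟨1 - eᵢ⟩`. Then `∏ (1 - eᵢ)` kills every `Pᵢᵢ`, hence the
regular trace, so it vanishes; orthogonalizing, `fᵢ = eᵢ ∏_{j<i} (1 - eⱼ)` is a complete family of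
orthogonal idempotents. The matrix `J = ∑ fₖ • Sₖ`, where `Sₖ` is the permutation matrix of the
transposition `(0 k)`, acts on the component `fₖ A` as `Sₖ`; hence `J² = 1` and
`(J P J)₀₀ = ∑ fₖ Pₖₖ`, which is regular because `Pₖₖ` is regular on the component `fₖ A ⊆ eₖ A`.
-/

open Finset

lemma IsIdempotentElem.mem_span_one_sub_iff {R : Type*} [CommRing R] {e : R}
    (he : IsIdempotentElem e) {y : R} : y ∈ Ideal.span {1 - e} ↔ e * y = 0 := by
  rw [← he.ker_toSpanSingleton_eq_span, LinearMap.mem_ker, LinearMap.toSpanSingleton_apply,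
    smul_eq_mul, mul_comm]

lemma Finset.prod_mul_sum_eq_zero {R I : Type*} [CommRing R] {s : Finset I} {a b : I → R}
    (h : ∀ i ∈ s, a i * b i = 0) : (∏ i ∈ s, a i) * ∑ i ∈ s, b i = 0 := by
  rw [mul_sum]
  refine sum_eq_zero fun i hi => ?_
  obtain ⟨c, hc⟩ := dvd_prod_of_mem a hi
  rw [hc, mul_right_comm, h i hi, zero_mul]

section Orthogonalize

variable {R I : Type*} [CommRing R] [Fintype I] [LinearOrder I]

def orthogonalize (e : I → R) (i : I) : R := e i * ∏ j with j < i, (1 - e j)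

variable {e : I → R}

lemma sum_orthogonalize : ∑ i, orthogonalize e i = 1 - ∏ i, (1 - e i) := by
  rw [prod_one_sub_ordered, sub_sub_cancel]
  rfl

lemma orthogonalize_mul_eq_zero {i : I} {y : R} (h : e i * y = 0) :
    orthogonalize e i * y = 0 := by
  rw [orthogonalize, mul_right_comm, h, zero_mul]

lemma orthogonalize_mul_orthogonalize_of_lt {i j : I} (he : IsIdempotentElem (e i)) (hij : i < j) :
    orthogonalize e i * orthogonalize e j = 0 := by
  obtain ⟨c, hc⟩ : 1 - e i ∣ ∏ k with k < j, (1 - e k) := dvd_prod_of_mem _ (by simpa using hij)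
  rw [orthogonalize, orthogonalize, hc]
  linear_combination (e j * c * ∏ k with k < i, (1 - e k)) * he.mul_one_sub_self

lemma orthogonalIdempotents_orthogonalize (he : ∀ i, IsIdempotentElem (e i)) :
    OrthogonalIdempotents (orthogonalize e) := by
  refine ⟨fun i => (he i).mul ?_, fun i j hij => ?_⟩
  · exact prod_induction _ IsIdempotentElem (fun _ _ => IsIdempotentElem.mul) .one
      fun j _ => (he j).one_sub
  · rcases hij.lt_or_gt with h | h
    · exact orthogonalize_mul_orthogonalize_of_lt (he i) h
    · rw [mul_comm]; exact orthogonalize_mul_orthogonalize_of_lt (he j) h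

lemma completeOrthogonalIdempotents_orthogonalize (he : ∀ i, IsIdempotentElem (e i))
    (h : ∏ i, (1 - e i) = 0) : CompleteOrthogonalIdempotents (orthogonalize e) :=
  ⟨orthogonalIdempotents_orthogonalize he, by rw [sum_orthogonalize, h, sub_zero]⟩

end Orthogonalize

lemma OrthogonalIdempotents.sum_smul_mul_mul_sum_smul {R S I : Type*} [CommSemiring R]
    [Semiring S] [Algebra R S] [Fintype I] {f : I → R} (hf : OrthogonalIdempotents f)
    (a b : I → S) (x : S) :
    (∑ i, f i • a i) * x * ∑ i, f i • b i = ∑ i, f i • (a i * x * b i) := by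
  classical
  simp only [sum_mul, mul_sum, smul_mul_assoc, mul_smul_comm, smul_sum, smul_smul, hf.mul_eq,
    ite_smul, zero_smul, sum_ite_eq, mem_univ, if_true]

lemma CompleteOrthogonalIdempotents.sum_mul_mem_nonZeroDivisors {R I : Type*} [CommRing R]
    [Fintype I] {f a : I → R} (hf : CompleteOrthogonalIdempotents f)
    (ha : ∀ i y, a i * y = 0 → f i * y = 0) : ∑ i, f i * a i ∈ nonZeroDivisors R := by
  classical
  rw [mem_nonZeroDivisors_iff_right]
  intro y hy
  have hfy : ∀ i, f i * y = 0 := by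
    intro i
    have hfa : f i * ∑ j, f j * a j = f i * a i := by
      simp only [mul_sum, ← mul_assoc, hf.mul_eq, ite_mul, zero_mul, sum_ite_eq, mem_univ, if_true]
    have hafy : a i * (f i * y) = 0 := by
      linear_combination (f i) * hy - y * hfa
    simpa only [← mul_assoc, (hf.idem i).eq] using ha i _ hafy
  calc y = (∑ i, f i) * y := by rw [hf.complete, one_mul]
    _ = 0 := by rw [sum_mul]; exact sum_eq_zero fun i _ => hfy i

lemma Matrix.permMatrix_swap_mul_self {R n : Type*} [Semiring R] [DecidableEq n] [Fintype n]
    (i j : n) : (Equiv.swap i j).permMatrix R * (Equiv.swap i j).permMatrix R = 1 := by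
  rw [← Matrix.permMatrix_mul, Equiv.swap_mul_self, Matrix.permMatrix_one]

lemma Matrix.permMatrix_mul_mul_permMatrix_apply {R n : Type*} [Semiring R] [DecidableEq n]
    [Fintype n] (σ τ : Equiv.Perm n) (P : Matrix n n R) (i j : n) :
    (σ.permMatrix R * P * τ.permMatrix R) i j = P (σ i) (τ.symm j) := by
  rw [Equiv.Perm.permMatrix, Equiv.Perm.permMatrix, PEquiv.toMatrix_toPEquiv_mul,
    PEquiv.mul_toMatrix_toPEquiv]
  rfl

/-- Over a pp-ring (every annihilator is generated by an idempotent), a square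
matrix with regular trace can be conjugated by an involutive matrix `J` so that
the `(1,1)` entry becomes regular. -/
theorem stmt_19 {A : Type*} [CommRing A]
    (hpp : ∀ x : A, ∃ e : A, e ^ 2 = e ∧
      ∀ y : A, x * y = 0 ↔ y ∈ Ideal.span ({1 - e} : Set A))
    (n : ℕ) (hn : 0 < n) (P : Matrix (Fin n) (Fin n) A)
    (htr : (∑ i, P i i) ∈ nonZeroDivisors A) :
    ∃ J : Matrix (Fin n) (Fin n) A, J * J = 1 ∧
      (J * P * J) ⟨0, hn⟩ ⟨0, hn⟩ ∈ nonZeroDivisors A := by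
  classical
  choose e he_sq hspan using fun i => hpp (P i i)
  have he : ∀ i, IsIdempotentElem (e i) := fun i => by rw [IsIdempotentElem, ← sq, he_sq i]
  have hann : ∀ i y, P i i * y = 0 ↔ e i * y = 0 := fun i y =>
    (hspan i y).trans (he i).mem_span_one_sub_iff
  have hprod : ∏ i, (1 - e i) = 0 := mem_nonZeroDivisors_iff_right.mp htr _ <|
    prod_mul_sum_eq_zero fun i _ => by rw [mul_comm, hann, (he i).mul_one_sub_self]
  have hf := completeOrthogonalIdempotents_orthogonalize he hprod
  let M : Fin n → Matrix (Fin n) (Fin n) A := fun k => (Equiv.swap ⟨0, hn⟩ k).permMatrix A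
  refine ⟨∑ k, orthogonalize e k • M k, ?_, ?_⟩
  · simpa only [mul_one, M, Matrix.permMatrix_swap_mul_self, ← sum_smul, hf.complete, one_smul]
      using hf.toOrthogonalIdempotents.sum_smul_mul_mul_sum_smul M M 1
  · simp only [hf.toOrthogonalIdempotents.sum_smul_mul_mul_sum_smul, Matrix.sum_apply,
      Matrix.smul_apply, smul_eq_mul, M, Matrix.permMatrix_mul_mul_permMatrix_apply, Equiv.swap_apply_left, Equiv.symm_swap]
    exact hf.sum_mul_mem_nonZeroDivisors fun i y h =>
      orthogonalize_mul_eq_zero ((hann i y).mp h)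
end
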